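/- arXiv:0904.3110 — 7 statements merged into one kernel-verified Lean document; each statement's English description precedes it below -/
import Mathlib

section
/- (Watson's identity.) Let e₁, …, eₙ be linearly independent vectors in a Euclidean space E, let a₁, …, aₙ and d ≥ 2 be integers, and set f = (a₁e₁ + … + aₙeₙ)/d. Denoting by sgn(x) the sign of a real number x, one has ((∑_{i=1}^n |aᵢ|) − 2d)·N(f) = ∑_{i=1}^n |aᵢ|·(N(f − sgn(aᵢ)eᵢ) − N(eᵢ)). -/
open scoped BigOperators RealInnerProductSpace

/-- **Watson's identity.** Let `e₁, …, eₙ` be linearly independent vectors in a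
Euclidean space `E`, let `a₁, …, aₙ` and `d ≥ 2` be integers, and set
`f = (a₁e₁ + … + aₙeₙ)/d`.  Then
`((∑ᵢ |aᵢ|) − 2d)·N(f) = ∑ᵢ |aᵢ|·(N(f − sgn(aᵢ)eᵢ) − N(eᵢ))`,
where `N(x) = ⟪x, x⟫` is the squared Euclidean length. -/
theorem watson_identity {E : Type*} [NormedAddCommGroup E] [InnerProductSpace ℝ E]
    [FiniteDimensional ℝ E] {n : ℕ}
    (e : Fin n → E) (he : LinearIndependent ℝ e)
    (a : Fin n → ℤ) (d : ℤ) (hd : 2 ≤ d)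
    (f : E) (hf : f = (d : ℝ)⁻¹ • ∑ i, (a i : ℝ) • e i) :
    ((∑ i, (|a i| : ℝ)) - 2 * (d : ℝ)) * ⟪f, f⟫ =
      ∑ i, (|a i| : ℝ) *
        (⟪f - (a i).sign • e i, f - (a i).sign • e i⟫ - ⟪e i, e i⟫) := by
  have hd0 : (d : ℝ) ≠ 0 := by
    have : (0:ℤ) < d := by omega
    exact_mod_cast this.ne'
  have hsum : (∑ i, (a i : ℝ) • e i) = (d : ℝ) • f := by
    rw [hf, smul_inv_smul₀ hd0]
  have key : ∑ i, (a i : ℝ) * ⟪f, e i⟫ = (d : ℝ) * ⟪f, f⟫ := by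
    have := congrArg (fun x => (⟪f, x⟫ : ℝ)) hsum
    simpa [inner_sum, real_inner_smul_right] using this
  have hterm : ∀ i, (|a i| : ℝ) *
      (⟪f - (a i).sign • e i, f - (a i).sign • e i⟫ - ⟪e i, e i⟫)
      = (|a i| : ℝ) * ⟪f, f⟫ - 2 * ((a i : ℝ) * ⟪f, e i⟫) := by
    intro i
    have hz : ((a i).sign • e i) = (((a i).sign : ℝ)) • e i := (Int.cast_smul_eq_zsmul ℝ _ _).symm
    rcases eq_or_ne (a i) 0 with h | h
    · simp [h]
    · have hs2 : (((a i).sign : ℝ))^2 = 1 := by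
        have h2 : ((a i).sign)^2 = 1 := by
          rw [← sq_abs, Int.abs_sign_of_ne_zero h]; ring
        exact_mod_cast congrArg (Int.cast : ℤ → ℝ) h2
      have habs : (|a i| : ℝ) * ((a i).sign : ℝ) = (a i : ℝ) := by
        have h2 := Int.sign_mul_abs (a i)
        have := congrArg (Int.cast : ℤ → ℝ) h2
        push_cast at this
        linarith [this]
      rw [hz, real_inner_sub_sub_self, real_inner_smul_right, real_inner_smul_left,
        real_inner_smul_right]
      linear_combination ((|a i| : ℝ) * (⟪e i, e i⟫ : ℝ)) * hs2 -
        2 * (⟪f, e i⟫ : ℝ) * habs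
  rw [Finset.sum_congr rfl (fun i _ => hterm i), Finset.sum_sub_distrib,
    ← Finset.sum_mul, ← Finset.mul_sum, key]
  ring
end

section
/- (Watson's inequality.) Let n ≥ 2, let Λ be a lattice in ℝ^n, let e₁, …, eₙ be n linearly independent minimal vectors of Λ, let d ≥ 2 be an integer and a₁, …, aₙ nonzero integers, and suppose that f = (a₁e₁ + … + aₙeₙ)/d belongs to Λ. Then ∑_{i=1}^n |aᵢ| ≥ 2d. -/
open scoped BigOperators RealInnerProductSpace

noncomputable section

/-- The minimum of a lattice `Λ` in `ℝⁿ`: the infimum of the squared Euclidean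
lengths `N(x) = ⟪x, x⟫` of the nonzero vectors of `Λ`. -/
def latticeMin {n : ℕ} (Λ : Submodule ℤ (EuclideanSpace ℝ (Fin n))) : ℝ :=
  sInf {r : ℝ | ∃ x ∈ Λ, x ≠ 0 ∧ ⟪x, x⟫ = r}

/-- The set of minimal vectors of a lattice `Λ`:
`S(Λ) = {x ∈ Λ : x ≠ 0, N(x) = min Λ}`. -/
def minimalVectors {n : ℕ} (Λ : Submodule ℤ (EuclideanSpace ℝ (Fin n))) :
    Set (EuclideanSpace ℝ (Fin n)) :=
  {x | x ∈ Λ ∧ x ≠ 0 ∧ ⟪x, x⟫ = latticeMin Λ}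

/-- `Λ` is a (full-rank) lattice in `ℝⁿ`: a discrete subgroup that spans `ℝⁿ`. -/
def IsLattice {n : ℕ} (Λ : Submodule ℤ (EuclideanSpace ℝ (Fin n))) : Prop :=
  DiscreteTopology Λ ∧ Submodule.span ℝ (Λ : Set (EuclideanSpace ℝ (Fin n))) = ⊤

/-- `Λ'` is a Minkowskian sublattice of `Λ`: it is generated by `n` linearly
independent minimal vectors of `Λ`. -/
def IsMinkowskian {n : ℕ} (Λ Λ' : Submodule ℤ (EuclideanSpace ℝ (Fin n))) : Prop :=
  ∃ e : Fin n → EuclideanSpace ℝ (Fin n),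
    LinearIndependent ℝ e ∧ (∀ i, e i ∈ minimalVectors Λ) ∧
      Λ' = Submodule.span ℤ (Set.range e)

/-- The quotient group `Λ/Λ'`. -/
abbrev quotLat {n : ℕ} (Λ Λ' : Submodule ℤ (EuclideanSpace ℝ (Fin n))) : Type :=
  Λ ⧸ (Submodule.comap Λ.subtype Λ')

/-- The index `[Λ : Λ']`. -/
def subIndex {n : ℕ} (Λ Λ' : Submodule ℤ (EuclideanSpace ℝ (Fin n))) : ℕ :=
  Nat.card (quotLat Λ Λ')

lemma watson_core {n : ℕ} (hn : 2 ≤ n)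
    (Λ : Submodule ℤ (EuclideanSpace ℝ (Fin n)))
    (e : Fin n → EuclideanSpace ℝ (Fin n))
    (he : LinearIndependent ℝ e) (hemin : ∀ i, e i ∈ minimalVectors Λ)
    (d : ℤ) (hd : 2 ≤ d) (b : Fin n → ℤ) (hb1 : ∀ i, 1 ≤ b i)
    (g : EuclideanSpace ℝ (Fin n))
    (hg : g = (d : ℝ)⁻¹ • ∑ i, (b i : ℝ) • e i) (hgΛ : g ∈ Λ) :
    2 * d ≤ ∑ i, b i := by
  have hd0 : (0:ℤ) < d := by linarith
  have hdR : (d:ℝ) ≠ 0 := by exact_mod_cast hd0.ne'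
  have hsum : (d:ℝ) • g = ∑ i, (b i : ℝ) • e i := by
    rw [hg, smul_inv_smul₀ hdR]
  set m := latticeMin Λ with hmdef
  have lower : ∀ x ∈ Λ, x ≠ 0 → m ≤ ⟪x, x⟫ := by
    intro x hx hx0
    refine csInf_le ⟨0, ?_⟩ ⟨x, hx, hx0, rfl⟩
    rintro r ⟨y, -, -, rfl⟩
    exact real_inner_self_nonneg
  have hm : ∀ i, ⟪e i, e i⟫ = m := fun i => (hemin i).2.2
  have heΛ : ∀ i, e i ∈ Λ := fun i => (hemin i).1
  have i0 : Fin n := ⟨0, by omega⟩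
  have i1 : Fin n := ⟨1, by omega⟩
  have he0 : ∀ i, e i ≠ 0 := fun i => (hemin i).2.1
  have hmpos : 0 < m := by
    rw [← hm i0, real_inner_self_eq_norm_sq]
    exact pow_pos (norm_pos_iff.2 (he0 i0)) 2
  have hg0 : g ≠ 0 := by
    intro h
    have hz : ∑ i, (b i : ℝ) • e i = 0 := by rw [← hsum, h, smul_zero]
    have := linearIndependent_iff'.1 he Finset.univ _ hz i0 (Finset.mem_univ _)
    have : b i0 = 0 := by exact_mod_cast this
    have := hb1 i0; omega
  by_cases hcase : ∃ j, g = e j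
  · exfalso
    obtain ⟨j, hj⟩ := hcase
    set c : Fin n → ℝ := fun i => (b i : ℝ) - if i = j then (d:ℝ) else 0 with hc
    have h2 : ∑ i, c i • e i = 0 := by
      simp only [hc, sub_smul, Finset.sum_sub_distrib, ite_smul, zero_smul,
        Finset.sum_ite_eq', Finset.mem_univ, if_true]
      rw [← hsum, hj, sub_self]
    have hz := linearIndependent_iff'.1 he Finset.univ c h2
    obtain ⟨i, hij⟩ : ∃ i : Fin n, i ≠ j :=
      Fintype.exists_ne_of_one_lt_card (by simpa using by omega) j
    have := hz i (Finset.mem_univ _)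
    rw [hc] at this
    simp only [if_neg hij, sub_zero] at this
    have : b i = 0 := by exact_mod_cast this
    have := hb1 i; omega
  · push_neg at hcase
    have key : ∀ i, 2 * ⟪g, e i⟫ ≤ ⟪g, g⟫ := by
      intro i
      have hmem : g - e i ∈ Λ := Submodule.sub_mem _ hgΛ (heΛ i)
      have hne : g - e i ≠ 0 := sub_ne_zero.2 (hcase i)
      have hlow := lower _ hmem hne
      have hexp : ⟪g - e i, g - e i⟫ = ⟪g,g⟫ - 2*⟪g, e i⟫ + m := by
        rw [real_inner_sub_sub_self, hm i]
      rw [hexp] at hlow; linarith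
    have hG : m ≤ ⟪g,g⟫ := lower g hgΛ hg0
    have hGpos : 0 < ⟪g,g⟫ := lt_of_lt_of_le hmpos hG
    have hdot : (d:ℝ) * ⟪g,g⟫ = ∑ i, (b i : ℝ) * ⟪g, e i⟫ := by
      calc (d:ℝ) * ⟪g,g⟫ = ⟪g, (d:ℝ) • g⟫ := (real_inner_smul_right _ _ _).symm
      _ = ⟪g, ∑ i, (b i:ℝ) • e i⟫ := by rw [hsum]
      _ = ∑ i, (b i:ℝ) * ⟪g, e i⟫ := by
          rw [inner_sum]; exact Finset.sum_congr rfl fun i _ => real_inner_smul_right _ _ _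
    have hbound : ∑ i, (b i:ℝ) * ⟪g, e i⟫ ≤ (∑ i, (b i:ℝ)) * (⟪g,g⟫/2) := by
      rw [Finset.sum_mul]
      refine Finset.sum_le_sum fun i _ => ?_
      have h1 : (1:ℝ) ≤ (b i : ℝ) := by exact_mod_cast hb1 i
      nlinarith [key i]
    have final : 2*(d:ℝ) ≤ ∑ i, (b i:ℝ) := by nlinarith [hdot ▸ hbound]
    have : ((2*d : ℤ):ℝ) ≤ ((∑ i, b i : ℤ):ℝ) := by push_cast; linarith
    exact_mod_cast this

/-- **Watson's inequality.** Let `n ≥ 2`, let `Λ` be a lattice in `ℝⁿ`, let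
`e₁, …, eₙ` be `n` linearly independent minimal vectors of `Λ`, let `d ≥ 2` be
an integer and `a₁, …, aₙ` nonzero integers, and suppose
`f = (a₁e₁ + … + aₙeₙ)/d ∈ Λ`.  Then `∑ᵢ |aᵢ| ≥ 2d`. -/
theorem watson_inequality {n : ℕ} (hn : 2 ≤ n)
    (Λ : Submodule ℤ (EuclideanSpace ℝ (Fin n))) (hΛ : IsLattice Λ)
    (e : Fin n → EuclideanSpace ℝ (Fin n))
    (he : LinearIndependent ℝ e) (hemin : ∀ i, e i ∈ minimalVectors Λ)
    (d : ℤ) (hd : 2 ≤ d) (a : Fin n → ℤ) (ha : ∀ i, a i ≠ 0)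
    (f : EuclideanSpace ℝ (Fin n))
    (hf : f = (d : ℝ)⁻¹ • ∑ i, (a i : ℝ) • e i) (hfΛ : f ∈ Λ) :
    2 * d ≤ ∑ i, |a i| := by
  set s : Fin n → ℤ := fun i => if a i < 0 then -1 else 1 with hs
  have habs : ∀ i, a i = s i * |a i| := by
    intro i
    rcases lt_or_ge (a i) 0 with h | h
    · simp [hs, h, abs_of_neg h]
    · simp [hs, not_lt.2 h, abs_of_nonneg h]
  set e' : Fin n → EuclideanSpace ℝ (Fin n) := fun i => ((s i : ℝ)) • e i with he'def
  have he'min : ∀ i, e' i ∈ minimalVectors Λ := by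
    intro i
    rcases lt_or_ge (a i) 0 with h | h
    · have hei : e' i = -e i := by simp [he'def, hs, h]
      rw [hei]
      obtain ⟨h1, h2, h3⟩ := hemin i
      exact ⟨neg_mem h1, neg_ne_zero.2 h2, by rwa [inner_neg_neg]⟩
    · have hei : e' i = e i := by simp [he'def, hs, not_lt.2 h]
      rw [hei]; exact hemin i
  have hs0 : ∀ i, (s i : ℝ) ≠ 0 := by
    intro i
    rcases lt_or_ge (a i) 0 with h | h
    · simp [hs, h]
    · simp [hs, h, not_lt.2 h]
  have he' : LinearIndependent ℝ e' := by
    refine Fintype.linearIndependent_iff.2 fun c hc i => ?_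
    have h2 : ∑ j, (c j * (s j : ℝ)) • e j = 0 := by
      simpa [he'def, smul_smul] using hc
    have h3 := Fintype.linearIndependent_iff.1 he _ h2 i
    exact (mul_eq_zero.1 h3).resolve_right (hs0 i)
  have hfe : f = (d : ℝ)⁻¹ • ∑ i, ((|a i| : ℤ) : ℝ) • e' i := by
    rw [hf]
    congr 1
    refine Finset.sum_congr rfl fun i _ => ?_
    simp only [he'def, smul_smul]
    congr 1
    rw [mul_comm]
    exact_mod_cast congrArg (Int.cast : ℤ → ℝ) (habs i)
  exact watson_core hn Λ e' he' he'min d hd (fun i => |a i|)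
    (fun i => show (1:ℤ) ≤ |a i| by have h := abs_pos.2 (ha i); omega) f hfe hfΛ
end
end

section
/- (Equality case of Watson's inequality.) Let n ≥ 2, let Λ be a lattice in ℝ^n, let e₁, …, eₙ be n linearly independent minimal vectors of Λ, let d ≥ 2 be an integer and a₁, …, aₙ nonzero integers, and suppose that f = (a₁e₁ + … + aₙeₙ)/d belongs to Λ. Then ∑_{i=1}^n |aᵢ| = 2d if and only if the n vectors f − sgn(aᵢ)eᵢ (for i = 1, …, n) are all minimal vectors of Λ. -/
open scoped BigOperators RealInnerProductSpace

noncomputable section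

/-- **Equality case of Watson's inequality.** Let `n ≥ 2`, let `Λ` be a lattice
in `ℝⁿ`, let `e₁, …, eₙ` be `n` linearly independent minimal vectors of `Λ`,
let `d ≥ 2` be an integer and `a₁, …, aₙ` nonzero integers, and suppose
`f = (a₁e₁ + … + aₙeₙ)/d ∈ Λ`.  Then `∑ᵢ |aᵢ| = 2d` if and only if the `n`
vectors `f − sgn(aᵢ)eᵢ` are all minimal vectors of `Λ`. -/
theorem watson_inequality_equality_case {n : ℕ} (hn : 2 ≤ n)
    (Λ : Submodule ℤ (EuclideanSpace ℝ (Fin n))) (hΛ : IsLattice Λ)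
    (e : Fin n → EuclideanSpace ℝ (Fin n))
    (he : LinearIndependent ℝ e) (hemin : ∀ i, e i ∈ minimalVectors Λ)
    (d : ℤ) (hd : 2 ≤ d) (a : Fin n → ℤ) (ha : ∀ i, a i ≠ 0)
    (f : EuclideanSpace ℝ (Fin n))
    (hf : f = (d : ℝ)⁻¹ • ∑ i, (a i : ℝ) • e i) (hfΛ : f ∈ Λ) :
    (∑ i, |a i|) = 2 * d ↔ ∀ i, f - (a i).sign • e i ∈ minimalVectors Λ := by
  classical
  set m := latticeMin Λ with hm
  have hdR : (0:ℝ) < (d:ℝ) := by exact_mod_cast lt_of_lt_of_le zero_lt_two hd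
  -- m is a lower bound for norms of nonzero lattice vectors
  have hmle : ∀ x ∈ Λ, x ≠ 0 → m ≤ ⟪x, x⟫ := by
    intro x hx hx0
    refine csInf_le ⟨0, ?_⟩ ⟨x, hx, hx0, rfl⟩
    rintro r ⟨y, hy, hy0, rfl⟩
    exact real_inner_self_nonneg
  -- f as a linear combination
  have hfe : f = ∑ i, ((a i : ℝ)/d) • e i := by
    rw [hf, Finset.smul_sum]
    refine Finset.sum_congr rfl fun i _ => ?_
    rw [smul_smul, div_eq_inv_mul]
  have hind := Fintype.linearIndependent_iff.mp he
  -- f ≠ 0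
  have hf0 : f ≠ 0 := by
    intro h0
    have h1 := hind (fun i => (a i : ℝ)/d) (by rw [← hfe, h0]) ⟨0, by omega⟩
    have h2 : ((a ⟨0, by omega⟩ : ℤ) : ℝ) = 0 :=
      (div_eq_zero_iff.mp h1).resolve_right hdR.ne'
    exact ha _ (by exact_mod_cast h2)
  set Nf : ℝ := ⟪f, f⟫ with hNfdef
  have hNf : 0 < Nf := by
    rcases lt_or_eq_of_le (real_inner_self_nonneg (x := f)) with h'|h'
    · exact h'
    · exact absurd (inner_self_eq_zero.mp h'.symm) hf0
  -- signs
  set ε : Fin n → ℝ := fun i => ((a i).sign : ℝ) with hε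
  have hsig : ∀ i, ε i = 1 ∨ ε i = -1 := by
    intro i
    rcases (ha i).lt_or_gt with h'|h'
    · exact Or.inr (by simp [hε, Int.sign_eq_neg_one_of_neg h'])
    · exact Or.inl (by simp [hε, Int.sign_eq_one_of_pos h'])
  have hsq : ∀ i, ε i * ε i = 1 := by
    intro i; rcases hsig i with h|h <;> rw [h] <;> norm_num
  have hvv : ∀ i, f - (a i).sign • e i = f - ε i • e i := by
    intro i; rw [hε]; rw [Int.cast_smul_eq_zsmul]
  -- norm of the shifted vectors
  set t : Fin n → ℝ := fun i => ε i * ⟪f, e i⟫ with ht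
  have hNv : ∀ i, ⟪f - ε i • e i, f - ε i • e i⟫ = Nf - 2 * t i + m := by
    intro i
    rw [real_inner_sub_sub_self, real_inner_smul_right, real_inner_smul_left,
      real_inner_smul_right, (hemin i).2.2, ← hm]
    have h3 : ε i * (ε i * m) = m := by rw [← mul_assoc, hsq i, one_mul]
    rw [h3]
  -- key identity
  have hkey : (d:ℝ) * Nf = ∑ i, (|a i| : ℝ) * t i := by
    have h1 : (d:ℝ) • f = ∑ i, (a i : ℝ) • e i := by
      rw [hf, smul_inv_smul₀ hdR.ne']
    have h2 : ⟪f, (d:ℝ) • f⟫ = ⟪f, ∑ i, (a i : ℝ) • e i⟫ := by rw [h1]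
    rw [real_inner_smul_right, inner_sum] at h2
    rw [← hNfdef] at h2
    rw [h2]
    refine Finset.sum_congr rfl fun i _ => ?_
    rw [real_inner_smul_right]
    have h3 : |(a i : ℝ)| * ((a i).sign : ℝ) = (a i : ℝ) := by
      rw [← Int.cast_abs, ← Int.cast_mul, mul_comm, Int.sign_mul_abs]
    simp only [ht, hε]
    linear_combination (-(⟪f, e i⟫ : ℝ)) * h3
  -- membership
  have hvmem : ∀ i, f - (a i).sign • e i ∈ Λ := fun i =>
    sub_mem hfΛ (Submodule.smul_mem Λ _ (hemin i).1)
  -- nonvanishing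
  have hvne : ∀ j, f - (a j).sign • e j ≠ 0 := by
    intro j h0
    rw [hvv j] at h0
    have hrepr : f - ε j • e j
        = ∑ i, (((a i : ℝ)/d) - if i = j then ε j else 0) • e i := by
      rw [hfe]
      rw [Finset.sum_congr rfl (fun i _ => sub_smul _ _ (e i)), Finset.sum_sub_distrib]
      congr 1
      symm
      rw [Finset.sum_eq_single j]
      · rw [if_pos rfl]
      · intro b _ hb; rw [if_neg hb, zero_smul]
      · intro h; exact absurd (Finset.mem_univ j) h
    have hz := hind _ (by rw [← hrepr, h0])
    haveI : Nontrivial (Fin n) := Fin.nontrivial_iff_two_le.mpr hn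
    obtain ⟨k, hk⟩ := exists_ne j
    have hzk := hz k
    rw [if_neg hk, sub_zero] at hzk
    have h2 : ((a k : ℤ) : ℝ) = 0 := (div_eq_zero_iff.mp hzk).resolve_right hdR.ne'
    exact ha k (by exact_mod_cast h2)
  -- each t i ≤ Nf / 2
  have htle : ∀ i, t i ≤ Nf / 2 := by
    intro i
    have h1 := hmle _ (hvmem i) (hvne i)
    rw [hvv i, hNv i] at h1
    linarith
  constructor
  · -- forward direction
    intro hsum
    intro i
    refine ⟨hvmem i, hvne i, ?_⟩
    rw [hvv i, hNv i, ← hm]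
    have hsumR : (∑ i, (|a i| : ℝ)) = 2 * d := by exact_mod_cast hsum
    have hzero : ∑ j, (|a j| : ℝ) * (Nf / 2 - t j) = 0 := by
      have : ∑ j, (|a j| : ℝ) * (Nf / 2 - t j)
          = (∑ j, (|a j| : ℝ)) * (Nf / 2) - ∑ j, (|a j| : ℝ) * t j := by
        rw [Finset.sum_mul, ← Finset.sum_sub_distrib]
        exact Finset.sum_congr rfl fun j _ => by ring
      rw [this, hsumR, ← hkey]; ring
    have hnonneg : ∀ j ∈ Finset.univ, (0:ℝ) ≤ (|a j| : ℝ) * (Nf / 2 - t j) := by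
      intro j _
      have h1 : (0:ℝ) ≤ (|a j| : ℝ) := by positivity
      have h2 : (0:ℝ) ≤ Nf / 2 - t j := by linarith [htle j]
      exact mul_nonneg h1 h2
    have hterm := (Finset.sum_eq_zero_iff_of_nonneg hnonneg).mp hzero i (Finset.mem_univ i)
    have habs : (0:ℝ) < (|a i| : ℝ) := by
      have : (1:ℤ) ≤ |a i| := Int.one_le_abs (ha i)
      exact_mod_cast lt_of_lt_of_le zero_lt_one (by exact_mod_cast this)
    have hti : t i = Nf / 2 := by
      rcases mul_eq_zero.mp hterm with h|h
      · exact absurd h habs.ne'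
      · linarith
    rw [hti]; ring
  · -- reverse direction
    intro hmin
    have hti : ∀ i, t i = Nf / 2 := by
      intro i
      have h1 := (hmin i).2.2
      rw [hvv i, hNv i, ← hm] at h1
      linarith
    have : (d:ℝ) * Nf = (∑ i, (|a i| : ℝ)) * (Nf / 2) := by
      rw [hkey, Finset.sum_mul]
      exact Finset.sum_congr rfl fun i _ => by rw [hti i]
    have h2 : Nf / 2 ≠ 0 := by positivity
    have h3 : (2 * (d:ℝ)) * (Nf / 2) = (∑ i, (|a i| : ℝ)) * (Nf / 2) := by
      rw [← this]; ring
    have hsumR : (∑ i, (|a i| : ℝ)) = 2 * d := (mul_right_cancel₀ h2 h3).symm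
    exact_mod_cast hsumR
end
end

section
/- There exists a lattice Λ in ℝ^n possessing a Minkowskian sublattice Λ' with [Λ : Λ'] = 2 if and only if n ≥ 4. (For n ≥ 4 one may take Λ' with an orthogonal basis e₁, …, eₙ of minimal vectors and Λ = ⟨Λ', (e₁ + … + eₙ)/2⟩; for n ≤ 3 no lattice admits a Minkowskian sublattice of index 2.) -/
open scoped BigOperators RealInnerProductSpace

noncomputable section

lemma latticeMin_le {n : ℕ} {Λ : Submodule ℤ (EuclideanSpace ℝ (Fin n))}
    {x : EuclideanSpace ℝ (Fin n)} (hx : x ∈ Λ) (hx0 : x ≠ 0) :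
    latticeMin Λ ≤ ⟪x, x⟫ := by
  apply csInf_le
  · exact ⟨0, by rintro r ⟨y, _, _, rfl⟩; exact real_inner_self_nonneg⟩
  · exact ⟨x, hx, hx0, rfl⟩

lemma forward_dir {n : ℕ} (Λ Λ' : Submodule ℤ (EuclideanSpace ℝ (Fin n)))
    (hM : IsMinkowskian Λ Λ') (hidx : subIndex Λ Λ' = 2) : 4 ≤ n := by
  classical
  obtain ⟨e, -, hmin, hspan⟩ := hM
  unfold subIndex at hidx
  set p := Submodule.comap Λ.subtype Λ' with hp
  have hnt : Nontrivial (quotLat Λ Λ') := by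
    rcases subsingleton_or_nontrivial (quotLat Λ Λ') with h | h
    · have h1 := Nat.card_of_subsingleton (0 : quotLat Λ Λ')
      omega
    · exact h
  obtain ⟨q, hq⟩ := exists_ne (0 : quotLat Λ Λ')
  have h2q : (2 : ℤ) • q = 0 := by
    have h := (card_nsmul_eq_zero' : Nat.card (quotLat Λ Λ') • q = 0)
    rw [hidx] at h
    rw [two_zsmul]; rw [two_nsmul] at h; exact h
  obtain ⟨xt, rfl⟩ := Submodule.Quotient.mk_surjective _ q
  set x : EuclideanSpace ℝ (Fin n) := (xt : EuclideanSpace ℝ (Fin n)) with hxdef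
  have hxΛ : x ∈ Λ := xt.2
  have hxnot : x ∉ Λ' := by
    intro hmem
    exact hq (Submodule.Quotient.mk_eq_zero _ |>.2 hmem)
  have h2x : (2 : ℤ) • x ∈ Λ' := by
    have : (2 : ℤ) • xt ∈ p := by
      rwa [← Submodule.Quotient.mk_eq_zero, Submodule.Quotient.mk_smul]
    simpa [hp, Submodule.mem_comap] using this
  rw [hspan] at h2x hxnot
  obtain ⟨c, hc⟩ := (Submodule.mem_span_range_iff_exists_fun ℤ).1 h2x
  -- reduce mod 2
  set z : EuclideanSpace ℝ (Fin n) := x - ∑ i, (c i / 2) • e i with hz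
  set S : Finset (Fin n) := Finset.univ.filter (fun i => c i % 2 = 1) with hS
  have hsumΛ' : (∑ i, (c i / 2) • e i) ∈ Submodule.span ℤ (Set.range e) :=
    Submodule.sum_mem _ fun i _ =>
      Submodule.smul_mem _ _ (Submodule.subset_span (Set.mem_range_self i))
  have hzΛ : z ∈ Λ := by
    apply Submodule.sub_mem _ hxΛ
    exact Submodule.sum_mem _ fun i _ => Submodule.smul_mem _ _ (hmin i).1
  have hznot : z ∉ Submodule.span ℤ (Set.range e) := by
    intro hmem
    apply hxnot
    have : x = z + ∑ i, (c i / 2) • e i := by rw [hz]; abel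
    rw [this]; exact Submodule.add_mem _ hmem hsumΛ'
  have h2z : (2 : ℤ) • z = ∑ i ∈ S, e i := by
    rw [hz, smul_sub, ← hc, Finset.smul_sum, ← Finset.sum_sub_distrib]
    have : ∀ i, c i • e i - (2:ℤ) • (c i / 2) • e i = (c i % 2) • e i := by
      intro i
      rw [smul_smul, ← sub_smul]
      congr 1
      omega
    rw [Finset.sum_congr rfl fun i _ => this i]
    rw [hS, Finset.sum_filter]
    refine Finset.sum_congr rfl fun i _ => ?_
    rcases Int.emod_two_eq_zero_or_one (c i) with h | h <;> simp [h]
  have hzne : z ≠ 0 := fun h => hznot (h ▸ Submodule.zero_mem _)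
  -- real version of h2z
  have h2zR : (2 : ℝ) • z = ∑ i ∈ S, e i := by
    rw [← h2z, ← Int.cast_smul_eq_zsmul ℝ]; norm_num
  set m := latticeMin Λ with hm
  set t : ℝ := ⟪z, z⟫ with ht
  have htpos : 0 < t := by
    rcases lt_or_eq_of_le (real_inner_self_nonneg (x := z)) with h | h
    · exact h
    · exact absurd (inner_self_eq_zero.1 h.symm) hzne
  have hinner : ∑ j ∈ S, ⟪z, e j⟫ = 2 * t := by
    rw [← inner_sum, ← h2zR, real_inner_smul_right]
  have hFle : ∀ j ∈ S, m ≤ ⟪z - e j, z - e j⟫ := by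
    intro j hj
    apply latticeMin_le (Submodule.sub_mem _ hzΛ (hmin j).1)
    intro h
    apply hznot
    have : z = e j := by rwa [sub_eq_zero] at h
    rw [this]; exact Submodule.subset_span (Set.mem_range_self j)
  have hcard : (4 : ℝ) ≤ S.card := by
    have key : (S.card : ℝ) * m ≤ (S.card : ℝ) * t - 2 * (2 * t) + S.card * m := by
      calc (S.card : ℝ) * m = ∑ _j ∈ S, m := by rw [Finset.sum_const, nsmul_eq_mul]
        _ ≤ ∑ j ∈ S, ⟪z - e j, z - e j⟫ := Finset.sum_le_sum hFle
        _ = ∑ j ∈ S, (t - 2 * ⟪z, e j⟫ + m) := by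
            refine Finset.sum_congr rfl fun j _ => ?_
            rw [real_inner_sub_sub_self, (hmin j).2.2]
        _ = (S.card : ℝ) * t - 2 * (∑ j ∈ S, ⟪z, e j⟫) + S.card * m := by
            rw [Finset.sum_add_distrib, Finset.sum_sub_distrib, Finset.sum_const,
              Finset.sum_const, ← Finset.mul_sum, nsmul_eq_mul, nsmul_eq_mul]
        _ = (S.card : ℝ) * t - 2 * (2 * t) + S.card * m := by rw [hinner]
    nlinarith
  have hSn : S.card ≤ n := by
    calc S.card ≤ Finset.univ.card := Finset.card_le_univ S
      _ = n := by simp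
  have : (4 : ℕ) ≤ S.card := by exact_mod_cast hcard
  omega

namespace MinkAux

variable {n : ℕ}

/-- standard basis vectors -/
def ee (n : ℕ) : Fin n → EuclideanSpace ℝ (Fin n) := fun i => EuclideanSpace.single i 1

/-- the all-halves vector -/
def hh (n : ℕ) : EuclideanSpace ℝ (Fin n) := WithLp.toLp 2 (fun _ => (2⁻¹ : ℝ))

def Lam' (n : ℕ) : Submodule ℤ (EuclideanSpace ℝ (Fin n)) :=
  Submodule.span ℤ (Set.range (ee n))

def Lam (n : ℕ) : Submodule ℤ (EuclideanSpace ℝ (Fin n)) :=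
  Submodule.span ℤ (insert (hh n) (Set.range (ee n)))

lemma zsmul_coord (k : ℤ) (v : EuclideanSpace ℝ (Fin n)) (i : Fin n) :
    (k • v) i = (k : ℝ) * v i := by
  have := map_zsmul (EuclideanSpace.projₗ (𝕜 := ℝ) i) k v
  simpa [zsmul_eq_mul] using this

lemma sum_coord {α : Type*} (s : Finset α) (f : α → EuclideanSpace ℝ (Fin n)) (i : Fin n) :
    (∑ a ∈ s, f a) i = ∑ a ∈ s, f a i := by
  exact map_sum (EuclideanSpace.projₗ (𝕜 := ℝ) i) f s

lemma ee_coord (i j : Fin n) : ee n i j = if j = i then 1 else 0 :=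
  EuclideanSpace.single_apply i 1 j

lemma mem_Lam' {x : EuclideanSpace ℝ (Fin n)} :
    x ∈ Lam' n ↔ ∀ i, ∃ m : ℤ, x i = m := by
  constructor
  · intro hx
    induction hx using Submodule.span_induction with
    | mem v hv =>
      obtain ⟨j, rfl⟩ := hv
      intro i
      rw [ee_coord]
      by_cases h : i = j <;> simp [h] <;> [exact ⟨1, by norm_num⟩; exact ⟨0, by norm_num⟩]
    | zero => exact fun i => ⟨0, by simp⟩
    | add u v _ _ hu hv =>
      intro i
      obtain ⟨a, ha⟩ := hu i; obtain ⟨b, hb⟩ := hv i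
      exact ⟨a + b, by push_cast [PiLp.add_apply, ha, hb]; ring⟩
    | smul k v _ hv =>
      intro i
      obtain ⟨a, ha⟩ := hv i
      exact ⟨k * a, by push_cast [zsmul_coord, ha]; ring⟩
  · intro hx
    choose m hm using hx
    apply (Submodule.mem_span_range_iff_exists_fun ℤ).2
    refine ⟨m, ?_⟩
    ext j
    rw [sum_coord]
    rw [Finset.sum_congr rfl fun i _ => by rw [zsmul_coord, ee_coord]]
    simp [hm j]

lemma mem_Lam {x : EuclideanSpace ℝ (Fin n)} :
    x ∈ Lam n ↔ ∃ k : ℤ, ∀ i, ∃ m : ℤ, x i = m + k * 2⁻¹ := by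
  rw [Lam, Submodule.mem_span_insert]
  constructor
  · rintro ⟨k, z, hz, rfl⟩
    refine ⟨k, fun i => ?_⟩
    obtain ⟨m, hm⟩ := mem_Lam'.1 hz i
    exact ⟨m, by rw [PiLp.add_apply, zsmul_coord, hm]; simp [hh]; ring⟩
  · rintro ⟨k, hk⟩
    refine ⟨k, x - k • hh n, ?_, by abel⟩
    apply mem_Lam'.2
    intro i
    obtain ⟨m, hm⟩ := hk i
    exact ⟨m, by rw [PiLp.sub_apply, zsmul_coord, hm]; simp [hh]⟩

lemma inner_eq_sum (x : EuclideanSpace ℝ (Fin n)) : ⟪x, x⟫ = ∑ i, x i ^ 2 := by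
  rw [real_inner_self_eq_norm_sq, EuclideanSpace.norm_sq_eq]
  simp [Real.norm_eq_abs, sq_abs]

lemma exists_coord_ne {x : EuclideanSpace ℝ (Fin n)} (hx : x ≠ 0) : ∃ i, x i ≠ 0 := by
  by_contra h
  push_neg at h
  exact hx (PiLp.ext h)

lemma norm_bound (hn : 4 ≤ n) {x : EuclideanSpace ℝ (Fin n)} (hx : x ∈ Lam n) (hx0 : x ≠ 0) :
    1 ≤ ⟪x, x⟫ := by
  obtain ⟨k, hk⟩ := mem_Lam.1 hx
  rw [inner_eq_sum]
  rcases Int.even_or_odd k with ⟨l, hl⟩ | ⟨l, hl⟩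
  · -- integer coordinates
    obtain ⟨j, hj⟩ := exists_coord_ne hx0
    obtain ⟨m, hm⟩ := hk j
    have hxj : x j = ((m + l : ℤ) : ℝ) := by rw [hm, hl]; push_cast; ring
    have hne : (m + l : ℤ) ≠ 0 := by
      intro h; apply hj; rw [hxj, h]; norm_num
    have h1 : (1 : ℤ) ≤ (m + l) ^ 2 := by
      rcases lt_or_gt_of_ne hne with h | h <;> nlinarith
    have h1' : (1 : ℝ) ≤ x j ^ 2 := by rw [hxj]; exact_mod_cast h1
    calc (1 : ℝ) ≤ x j ^ 2 := h1'
      _ ≤ ∑ i, x i ^ 2 :=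
        Finset.single_le_sum (fun i _ => sq_nonneg (x i)) (Finset.mem_univ j)
  · -- half-odd coordinates
    have key : ∀ i, (4⁻¹ : ℝ) ≤ x i ^ 2 := by
      intro i
      obtain ⟨m, hm⟩ := hk i
      have h2x : (2 : ℝ) * x i = ((2 * m + k : ℤ) : ℝ) := by rw [hm]; push_cast; ring
      have hodd : (2 * m + k) ≠ 0 := by omega
      have h1 : (1 : ℤ) ≤ (2 * m + k) ^ 2 := by
        rcases lt_or_gt_of_ne hodd with h | h <;> nlinarith
      have h1' : (1 : ℝ) ≤ ((2 * m + k : ℤ) : ℝ) ^ 2 := by exact_mod_cast h1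
      have h4 : (1 : ℝ) ≤ (2 * x i) ^ 2 := by rw [h2x]; exact h1'
      nlinarith
    calc (1 : ℝ) ≤ n * 4⁻¹ := by
          have : (4 : ℝ) ≤ n := by exact_mod_cast hn
          linarith
      _ = ∑ _i : Fin n, (4⁻¹ : ℝ) := by
          rw [Finset.sum_const, Finset.card_univ, Fintype.card_fin, nsmul_eq_mul]
      _ ≤ ∑ i, x i ^ 2 := Finset.sum_le_sum fun i _ => key i

lemma ee_mem_Lam (i : Fin n) : ee n i ∈ Lam n :=
  Submodule.subset_span (Set.mem_insert_of_mem _ (Set.mem_range_self i))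

lemma ee_ne_zero (i : Fin n) : ee n i ≠ 0 := by
  intro h
  have := congrArg (fun v => v i) h
  rw [ee_coord] at this
  simp at this

lemma inner_ee (i : Fin n) : ⟪ee n i, ee n i⟫ = 1 := by
  rw [inner_eq_sum]
  rw [Finset.sum_congr rfl fun j _ => by rw [ee_coord]]
  simp

lemma latticeMin_Lam (hn : 4 ≤ n) : latticeMin (Lam n) = 1 := by
  have i0 : Fin n := ⟨0, by omega⟩
  have hmem1 : (1 : ℝ) ∈ {r : ℝ | ∃ x ∈ Lam n, x ≠ 0 ∧ ⟪x, x⟫ = r} :=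
    ⟨ee n i0, ee_mem_Lam i0, ee_ne_zero i0, inner_ee i0⟩
  refine le_antisymm (csInf_le ⟨1, ?_⟩ hmem1) (le_csInf ⟨1, hmem1⟩ ?_)
  · rintro r ⟨x, hx, hx0, rfl⟩
    exact norm_bound hn hx hx0
  · rintro r ⟨x, hx, hx0, rfl⟩
    exact norm_bound hn hx hx0

lemma ee_minimal (hn : 4 ≤ n) (i : Fin n) : ee n i ∈ minimalVectors (Lam n) :=
  ⟨ee_mem_Lam i, ee_ne_zero i, by rw [latticeMin_Lam hn, inner_ee]⟩

lemma ee_linearIndependent : LinearIndependent ℝ (ee n) := by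
  have : ee n = ⇑(EuclideanSpace.basisFun (Fin n) ℝ).toBasis := by
    funext i
    rw [OrthonormalBasis.coe_toBasis, EuclideanSpace.basisFun_apply]
    rfl
  rw [this]
  exact (EuclideanSpace.basisFun (Fin n) ℝ).toBasis.linearIndependent

lemma Lam_discrete (hn : 4 ≤ n) : DiscreteTopology (Lam n) := by
  apply discreteTopology_of_isOpen_singleton_zero
  have heq : ({0} : Set (Lam n)) = (Subtype.val ⁻¹' Metric.ball (0 : EuclideanSpace ℝ (Fin n)) 1) := by
    ext ⟨x, hx⟩
    simp only [Set.mem_singleton_iff, Set.mem_preimage, Metric.mem_ball, dist_zero_right]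
    constructor
    · intro h
      have hx0 : x = 0 := congrArg Subtype.val h
      simp [hx0]
    · intro hlt
      by_contra h0
      have hx0 : x ≠ 0 := fun h => h0 (Subtype.ext h)
      have h1 : 1 ≤ ⟪x, x⟫ := norm_bound hn hx hx0
      rw [real_inner_self_eq_norm_sq] at h1
      nlinarith [norm_nonneg x]
  rw [heq]
  exact continuous_subtype_val.isOpen_preimage _ Metric.isOpen_ball

lemma Lam_span (hn : 4 ≤ n) :
    Submodule.span ℝ ((Lam n : Set (EuclideanSpace ℝ (Fin n)))) = ⊤ := by
  refine le_antisymm le_top ?_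
  have h1 : Submodule.span ℝ (Set.range (ee n)) = ⊤ := by
    have : ee n = ⇑(EuclideanSpace.basisFun (Fin n) ℝ).toBasis := by
      funext i
      rw [OrthonormalBasis.coe_toBasis, EuclideanSpace.basisFun_apply]
      rfl
    rw [this]
    exact Module.Basis.span_eq _
  rw [← h1]
  apply Submodule.span_mono
  rintro v ⟨i, rfl⟩
  exact ee_mem_Lam i

lemma hh_mem_Lam : hh n ∈ Lam n :=
  Submodule.subset_span (Set.mem_insert _ _)

lemma hh_not_mem_Lam' (hn : 4 ≤ n) : hh n ∉ Lam' n := by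
  intro h
  obtain ⟨m, hm⟩ := mem_Lam'.1 h ⟨0, by omega⟩
  have h2 : (2 : ℝ) * m = 1 := by
    rw [← hm]; show (2:ℝ) * 2⁻¹ = 1; norm_num
  have h3 : (2 * m : ℤ) = 1 := by exact_mod_cast h2
  omega

lemma Lam'_le_Lam : Lam' n ≤ Lam n :=
  Submodule.span_mono (Set.subset_insert _ _)

lemma even_smul_hh_add_mem {k : ℤ} (hk : k % 2 = 0) {z : EuclideanSpace ℝ (Fin n)}
    (hz : ∀ i, ∃ m : ℤ, z i = m + k * 2⁻¹) : z ∈ Lam' n := by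
  apply mem_Lam'.2
  intro i
  obtain ⟨m, hm⟩ := hz i
  refine ⟨m + k / 2, ?_⟩
  rw [hm]
  have : (k : ℝ) = ((2 * (k / 2) : ℤ) : ℝ) := by exact_mod_cast (by omega : k = 2 * (k/2))
  rw [this]; push_cast; ring

lemma index_two (hn : 4 ≤ n) : subIndex (Lam n) (Lam' n) = 2 := by
  unfold subIndex
  rw [Nat.card_eq_two_iff]
  set p := Submodule.comap (Lam n).subtype (Lam' n) with hp
  refine ⟨(0 : quotLat (Lam n) (Lam' n)),
    Submodule.Quotient.mk ⟨hh n, hh_mem_Lam⟩, ?_, ?_⟩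
  · intro h
    have := (Submodule.Quotient.mk_eq_zero p).1 h.symm
    exact hh_not_mem_Lam' hn this
  · rw [Set.eq_univ_iff_forall]
    intro q
    obtain ⟨⟨x, hx⟩, rfl⟩ := Submodule.Quotient.mk_surjective p q
    obtain ⟨k, hk⟩ := mem_Lam.1 hx
    simp only [Set.mem_insert_iff, Set.mem_singleton_iff]
    rcases Int.emod_two_eq_zero_or_one k with hke | hko
    · left
      rw [Submodule.Quotient.mk_eq_zero]
      exact even_smul_hh_add_mem hke hk
    · right
      rw [Submodule.Quotient.eq]
      have hmem : x - hh n ∈ Lam' n := by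
        apply even_smul_hh_add_mem (k := k - 1) (by omega)
        intro i
        obtain ⟨m, hm⟩ := hk i
        refine ⟨m, ?_⟩
        rw [PiLp.sub_apply, hm]
        show (m : ℝ) + k * 2⁻¹ - 2⁻¹ = m + (↑(k - 1)) * 2⁻¹
        push_cast; ring
      exact hmem

end MinkAux

/-- There exists a lattice `Λ` in `ℝⁿ` possessing a Minkowskian sublattice `Λ'`
with `[Λ : Λ'] = 2` if and only if `n ≥ 4`. -/
theorem exists_minkowskian_index_two_iff (n : ℕ) :
    (∃ Λ Λ' : Submodule ℤ (EuclideanSpace ℝ (Fin n)),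
      IsLattice Λ ∧ IsMinkowskian Λ Λ' ∧ subIndex Λ Λ' = 2) ↔ 4 ≤ n := by
  constructor
  · rintro ⟨Λ, Λ', _, hM, hidx⟩
    exact forward_dir Λ Λ' hM hidx
  · intro hn
    exact ⟨MinkAux.Lam n, MinkAux.Lam' n,
      ⟨MinkAux.Lam_discrete hn, MinkAux.Lam_span hn⟩,
      ⟨MinkAux.ee n, MinkAux.ee_linearIndependent, MinkAux.ee_minimal hn, rfl⟩,
      MinkAux.index_two hn⟩
end
end

section
/- For every n ≥ 2, every Minkowskian sublattice Λ' of the root lattice Dₙ has index [Dₙ : Λ'] = 2^k for some integer k with 0 ≤ k ≤ ⌊(n−2)/2⌋. -/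
open scoped BigOperators RealInnerProductSpace

noncomputable section

/-- The root lattice `Dₙ = {x ∈ ℤⁿ : x₁ + … + xₙ ≡ 0 (mod 2)}`. -/
def Dlattice (n : ℕ) : Submodule ℤ (EuclideanSpace ℝ (Fin n)) where
  carrier := {x | ∃ c : Fin n → ℤ, 2 ∣ (∑ i, c i) ∧ ∀ i, x i = (c i : ℝ)}
  zero_mem' := ⟨0, by simp, fun i => by simp⟩
  add_mem' := by
    rintro x y ⟨c, hc, hxc⟩ ⟨d, hd, hyd⟩
    refine ⟨c + d, ?_, fun i => ?_⟩
    · simpa [Finset.sum_add_distrib] using dvd_add hc hd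
    · simp [hxc i, hyd i]
  smul_mem' := by
    rintro z x ⟨c, hc, hxc⟩
    refine ⟨z • c, ?_, fun i => ?_⟩
    · simpa [Finset.mul_sum] using hc.mul_left z
    · simp [hxc i, Pi.smul_apply, zsmul_eq_mul]



open Finset Submodule




/-- Column class: entries in {1,-1,0}, support has at most 2 elements, nonzero. -/
def Col {n : ℕ} (w : Fin n → ℤ) : Prop :=
  (∀ i, w i = 1 ∨ w i = -1 ∨ w i = 0) ∧
  (∀ i₁ i₂ i₃ : Fin n, i₁ ≠ i₂ → i₁ ≠ i₃ → i₂ ≠ i₃ → w i₁ = 0 ∨ w i₂ = 0 ∨ w i₃ = 0) ∧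
  w ≠ 0

lemma expand_sum {n N : ℕ} (v : Fin N → (Fin n → ℤ)) (j : Fin N) (c : Fin N → ℤ)
    (g : Fin N → ℤ) :
    ∑ k, g k • (v k + c k • v j) = ∑ k, g k • v k + (∑ k, g k * c k) • v j := by
  simp only [smul_add, smul_smul, Finset.sum_add_distrib, Finset.sum_smul]

/-- Simultaneous elementary column operations preserve span and independence. -/
lemma update_family {n N : ℕ} (v : Fin N → (Fin n → ℤ)) (j : Fin N) (c : Fin N → ℤ)
    (hcj : c j = 0) :
    Submodule.span ℤ (Set.range (fun k => v k + c k • v j)) = Submodule.span ℤ (Set.range v) ∧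
    (LinearIndependent ℤ v → LinearIndependent ℤ (fun k => v k + c k • v j)) := by
  have hv'j : v j + c j • v j = v j := by rw [hcj]; simp
  constructor
  · apply le_antisymm
    · rw [Submodule.span_le]
      rintro _ ⟨k, rfl⟩
      exact add_mem (subset_span ⟨k, rfl⟩) (smul_mem _ _ (subset_span ⟨j, rfl⟩))
    · rw [Submodule.span_le]
      rintro _ ⟨k, rfl⟩
      have hk : v k = (v k + c k • v j) - c k • (v j + c j • v j) := by
        rw [hv'j, add_sub_cancel_right]
      rw [hk]
      exact sub_mem (subset_span ⟨k, rfl⟩) (smul_mem _ _ (subset_span ⟨j, rfl⟩))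
  · intro hind
    rw [Fintype.linearIndependent_iff] at hind ⊢
    intro g hg
    set S := ∑ t, g t * c t with hS
    set G : Fin N → ℤ := fun k' => g k' + (if k' = j then S else 0) with hG
    have key : ∑ k, G k • v k = 0 := by
      have h1 : ∑ k, G k • v k = ∑ k, g k • v k + ∑ k, (if k = j then S else 0) • v k := by
        simp only [hG, add_smul, Finset.sum_add_distrib]
      have h2 : ∑ k, (if k = j then S else 0) • v k = S • v j := by
        have : ∀ k ∈ Finset.univ, (if k = j then S else 0) • v k
            = (if k = j then S • v k else 0) := by
          intro k _; by_cases hk : k = j <;> simp [hk]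
        rw [Finset.sum_congr rfl this, Finset.sum_ite_eq' Finset.univ j (fun k => S • v k)]
        simp
      rw [h1, h2, ← expand_sum v j c g, hg]
    have hall := hind G key
    have hknj : ∀ k, k ≠ j → g k = 0 := by
      intro k hk
      have := hall k
      simpa [hG, hk] using this
    have hS0 : S = 0 := by
      rw [hS]
      apply Finset.sum_eq_zero
      intro t _
      by_cases ht : t = j
      · rw [ht, hcj, mul_zero]
      · rw [hknj t ht, zero_mul]
    intro k
    by_cases hk : k = j
    · have := hall j
      rw [hG] at this
      simp only [hS0, ite_self, add_zero] at this
      rw [hk]; exact this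
    · exact hknj k hk



lemma step1 {n : ℕ} (v : Fin (n+1) → (Fin (n+1) → ℤ)) (i j : Fin (n+1))
    (hs : v j i = 1 ∨ v j i = -1) (hz : ∀ k, k ≠ j → v k i = 0)
    (hcol : ∀ k, Col (v k)) (hind : LinearIndependent ℤ v) :
    ∃ v' : Fin n → (Fin n → ℤ), (∀ k, Col (v' k)) ∧ LinearIndependent ℤ v' ∧
      Nat.card ((Fin (n+1) → ℤ) ⧸ Submodule.span ℤ (Set.range v)) =
      Nat.card ((Fin n → ℤ) ⧸ Submodule.span ℤ (Set.range v')) := by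
  have hss : v j i * v j i = 1 := by rcases hs with h | h <;> rw [h] <;> norm_num
  set v' : Fin n → (Fin n → ℤ) := fun k r => v (j.succAbove k) (i.succAbove r) with hv'
  -- linear independence of v'
  have hind' : LinearIndependent ℤ v' := by
    rw [Fintype.linearIndependent_iff]
    intro g hg
    set G : Fin (n+1) → ℤ := j.insertNth 0 g with hG
    have hzero : ∑ t, G t • v t = 0 := by
      rw [Fin.sum_univ_succAbove (fun t => G t • v t) j]
      simp only [hG, Fin.insertNth_apply_same, Fin.insertNth_apply_succAbove, zero_smul, zero_add]
      funext t
      simp only [Finset.sum_apply, Pi.smul_apply, smul_eq_mul, Pi.zero_apply]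
      by_cases ht : t = i
      · exact Finset.sum_eq_zero fun k _ => by rw [ht, hz _ (Fin.succAbove_ne j k), mul_zero]
      · obtain ⟨r, hr⟩ := Fin.exists_succAbove_eq ht
        have h2 := congrFun hg r
        simp only [hv', Finset.sum_apply, Pi.smul_apply, smul_eq_mul, Pi.zero_apply] at h2
        rw [← hr]
        exact h2
    intro k
    have := (Fintype.linearIndependent_iff.mp hind) G hzero (j.succAbove k)
    simpa [hG, Fin.insertNth_apply_succAbove] using this
  refine ⟨v', ?_, hind', ?_⟩
  · intro k
    refine ⟨fun r => (hcol (j.succAbove k)).1 (i.succAbove r), ?_, hind'.ne_zero k⟩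
    intro r₁ r₂ r₃ h12 h13 h23
    exact (hcol (j.succAbove k)).2.1 _ _ _
      (fun h => h12 (Fin.succAbove_right_injective h))
      (fun h => h13 (Fin.succAbove_right_injective h))
      (fun h => h23 (Fin.succAbove_right_injective h))
  -- cardinality via first isomorphism theorem
  · set g0 : (Fin (n+1) → ℤ) →ₗ[ℤ] (Fin n → ℤ) :=
      { toFun := fun x => fun r => x (i.succAbove r) - (v j i * x i) * v j (i.succAbove r)
        map_add' := by intro x y; funext r; simp only [Pi.add_apply]; ring
        map_smul' := by
          intro z x; funext r
          simp only [Pi.smul_apply, smul_eq_mul, RingHom.id_apply]; ring } with hg0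
    set f : (Fin (n+1) → ℤ) →ₗ[ℤ] ((Fin n → ℤ) ⧸ Submodule.span ℤ (Set.range v')) :=
      (Submodule.span ℤ (Set.range v')).mkQ.comp g0 with hf
    have hsurj : Function.Surjective f := by
      intro y
      obtain ⟨x', rfl⟩ := Submodule.Quotient.mk_surjective _ y
      refine ⟨i.insertNth 0 x', ?_⟩
      have hgx : g0 (i.insertNth 0 x') = x' := by
        funext r
        simp only [hg0, LinearMap.coe_mk, AddHom.coe_mk, Fin.insertNth_apply_same,
          Fin.insertNth_apply_succAbove]
        ring
      rw [hf, LinearMap.comp_apply, hgx, Submodule.mkQ_apply]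
    have hker : LinearMap.ker f = Submodule.span ℤ (Set.range v) := by
      ext x
      rw [hf, LinearMap.mem_ker, LinearMap.comp_apply, Submodule.mkQ_apply,
        Submodule.Quotient.mk_eq_zero]
      constructor
      · intro hx
        rw [mem_span_range_iff_exists_fun] at hx
        obtain ⟨cc, hcc⟩ := hx
        have hxeq : x = (v j i * x i) • v j + ∑ k, cc k • v (j.succAbove k) := by
          funext t
          simp only [Pi.add_apply, Pi.smul_apply, smul_eq_mul, Finset.sum_apply]
          by_cases ht : t = i
          · have hsum0 : ∑ k, cc k * v (j.succAbove k) t = 0 :=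
              Finset.sum_eq_zero fun k _ => by rw [ht, hz _ (Fin.succAbove_ne j k), mul_zero]
            rw [hsum0, ht]
            have : v j i * x i * v j i = x i * (v j i * v j i) := by ring
            rw [this, hss, mul_one, add_zero]
          · obtain ⟨r, hr⟩ := Fin.exists_succAbove_eq ht
            have h2 := congrFun hcc r
            simp only [hv', hg0, LinearMap.coe_mk, AddHom.coe_mk, Finset.sum_apply,
              Pi.smul_apply, smul_eq_mul] at h2
            rw [← hr]
            linarith [h2]
        rw [hxeq]
        refine add_mem (smul_mem _ _ (subset_span ⟨j, rfl⟩)) (sum_mem fun k _ => ?_)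
        exact smul_mem _ _ (subset_span ⟨j.succAbove k, rfl⟩)
      · intro hx
        rw [mem_span_range_iff_exists_fun] at hx
        obtain ⟨cc, hcc⟩ := hx
        rw [← hcc, map_sum]
        apply sum_mem
        intro k _
        rw [map_smul]
        apply smul_mem
        by_cases hkj : k = j
        · have hz0 : g0 (v k) = 0 := by
            funext r
            simp only [hg0, LinearMap.coe_mk, AddHom.coe_mk, Pi.zero_apply, hkj]
            rw [hss]; ring
          rw [hz0]; exact zero_mem _
        · obtain ⟨k', hk'⟩ := Fin.exists_succAbove_eq hkj
          have hvk : g0 (v k) = v' k' := by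
            funext r
            simp only [hg0, LinearMap.coe_mk, AddHom.coe_mk, hv', hk']
            rw [hz _ hkj, mul_zero, zero_mul, sub_zero]
          rw [hvk]
          exact subset_span ⟨k', rfl⟩
    have equiv := (Submodule.quotEquivOfEq _ _ hker.symm).trans
      (f.quotKerEquivOfSurjective hsurj)
    exact Nat.card_congr equiv.toEquiv



lemma step2 {n : ℕ} (v : Fin (n+2) → (Fin (n+2) → ℤ)) (a b j₀ j' : Fin (n+2))
    (hab : a ≠ b) (hjj : j₀ ≠ j')
    (h0a : v j₀ a = 1 ∨ v j₀ a = -1) (h0b : v j₀ b = 1 ∨ v j₀ b = -1)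
    (h'a : v j' a = 1 ∨ v j' a = -1) (h'b : v j' b = 1 ∨ v j' b = -1)
    (hsupp0 : ∀ t, t ≠ a → t ≠ b → v j₀ t = 0)
    (hsupp' : ∀ t, t ≠ a → t ≠ b → v j' t = 0)
    (hresta : ∀ k, k ≠ j₀ → k ≠ j' → v k a = 0)
    (hrestb : ∀ k, k ≠ j₀ → k ≠ j' → v k b = 0)
    (hcol : ∀ k, Col (v k)) (hind : LinearIndependent ℤ v) :
    ∃ v'' : Fin n → (Fin n → ℤ), (∀ k, Col (v'' k)) ∧ LinearIndependent ℤ v'' ∧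
      Nat.card ((Fin (n+2) → ℤ) ⧸ Submodule.span ℤ (Set.range v)) =
      2 * Nat.card ((Fin n → ℤ) ⧸ Submodule.span ℤ (Set.range v'')) := by
  obtain ⟨p, hp⟩ := Fin.exists_succAbove_eq hab.symm   -- a.succAbove p = b
  obtain ⟨q, hq⟩ := Fin.exists_succAbove_eq (Ne.symm hjj)  -- j₀.succAbove q = j'
  set embRow : Fin n → Fin (n+2) := fun r => a.succAbove (p.succAbove r) with hembRow
  set embCol : Fin n → Fin (n+2) := fun k => j₀.succAbove (q.succAbove k) with hembCol
  have hRa : ∀ r, embRow r ≠ a := fun r => Fin.succAbove_ne a _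
  have hRb : ∀ r, embRow r ≠ b := by
    intro r h
    rw [← hp] at h
    exact Fin.succAbove_ne p r (Fin.succAbove_right_injective h)
  have hRsurj : ∀ t : Fin (n+2), t ≠ a → t ≠ b → ∃ r, embRow r = t := by
    intro t hta htb
    obtain ⟨u, hu⟩ := Fin.exists_succAbove_eq hta
    have hup : u ≠ p := fun h => htb (by rw [← hu, h, hp])
    obtain ⟨r, hr⟩ := Fin.exists_succAbove_eq hup
    exact ⟨r, by rw [hembRow]; simp only []; rw [hr, hu]⟩
  have hRinj : Function.Injective embRow := fun r₁ r₂ h =>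
    Fin.succAbove_right_injective (Fin.succAbove_right_injective h)
  have hC0 : ∀ k, embCol k ≠ j₀ := fun k => Fin.succAbove_ne j₀ _
  have hC' : ∀ k, embCol k ≠ j' := by
    intro k h
    rw [← hq] at h
    exact Fin.succAbove_ne q k (Fin.succAbove_right_injective h)
  -- the 2x2 determinant d
  set d : ℤ := v j₀ a * v j' b - v j' a * v j₀ b with hd_def
  have hdne : d ≠ 0 := by
    intro hd0
    set G : Fin (n+2) → ℤ := j₀.insertNth (v j' b) (q.insertNth (-(v j₀ b)) 0) with hG
    have hGsum : ∑ t, G t • v t = v j' b • v j₀ + (-(v j₀ b)) • v j' := by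
      rw [Fin.sum_univ_succAbove (fun t => G t • v t) j₀]
      rw [Fin.sum_univ_succAbove (fun u => G (j₀.succAbove u) • v (j₀.succAbove u)) q]
      simp only [hG, Fin.insertNth_apply_same, Fin.insertNth_apply_succAbove,
        Pi.zero_apply, zero_smul, Finset.sum_const_zero, add_zero]
      rw [hq]
    have hGzero : ∑ t, G t • v t = 0 := by
      rw [hGsum]; funext t
      simp only [Pi.add_apply, Pi.smul_apply, smul_eq_mul, Pi.zero_apply, Pi.neg_apply]
      by_cases hta : t = a
      · rw [hta]; rw [hd_def] at hd0; linarith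
      · by_cases htb : t = b
        · rw [htb]; ring
        · rw [hsupp0 t hta htb, hsupp' t hta htb]; ring
    have := (Fintype.linearIndependent_iff.mp hind) G hGzero j₀
    rw [hG, Fin.insertNth_apply_same] at this
    rcases h'b with h | h <;> rw [h] at this <;> norm_num at this
  have hd : d = 2 ∨ d = -2 := by
    have : d = 2 ∨ d = -2 ∨ d = 0 := by
      rcases h0a with h1 | h1 <;> rcases h0b with h2 | h2 <;> rcases h'a with h3 | h3 <;>
        rcases h'b with h4 | h4 <;> rw [hd_def, h1, h2, h3, h4] <;> norm_num
    rcases this with h | h | h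
    · exact Or.inl h
    · exact Or.inr h
    · exact absurd h hdne
  set v'' : Fin n → (Fin n → ℤ) := fun k r => v (embCol k) (embRow r) with hv''
  -- linear independence
  have hind'' : LinearIndependent ℤ v'' := by
    rw [Fintype.linearIndependent_iff]
    intro g hg
    set G : Fin (n+2) → ℤ := j₀.insertNth 0 (q.insertNth 0 g) with hG
    have hGsum : ∑ t, G t • v t = ∑ k, g k • v (embCol k) := by
      rw [Fin.sum_univ_succAbove (fun t => G t • v t) j₀]
      rw [Fin.sum_univ_succAbove (fun u => G (j₀.succAbove u) • v (j₀.succAbove u)) q]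
      simp only [hG, Fin.insertNth_apply_same, Fin.insertNth_apply_succAbove, zero_smul,
        zero_add, hembCol]
    have hGzero : ∑ t, G t • v t = 0 := by
      rw [hGsum]; funext t
      simp only [Finset.sum_apply, Pi.smul_apply, smul_eq_mul, Pi.zero_apply]
      by_cases hta : t = a
      · exact Finset.sum_eq_zero fun k _ => by
          rw [hta, hresta _ (hC0 k) (hC' k), mul_zero]
      · by_cases htb : t = b
        · exact Finset.sum_eq_zero fun k _ => by
            rw [htb, hrestb _ (hC0 k) (hC' k), mul_zero]
        · obtain ⟨r, hr⟩ := hRsurj t hta htb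
          have h2 := congrFun hg r
          simp only [hv'', Finset.sum_apply, Pi.smul_apply, smul_eq_mul, Pi.zero_apply] at h2
          rw [← hr]; exact h2
    intro k
    have := (Fintype.linearIndependent_iff.mp hind) G hGzero (embCol k)
    rw [hG, hembCol] at this
    simpa [Fin.insertNth_apply_succAbove] using this
  refine ⟨v'', ?_, hind'', ?_⟩
  · intro k
    refine ⟨fun r => (hcol (embCol k)).1 (embRow r), ?_, hind''.ne_zero k⟩
    intro r₁ r₂ r₃ h12 h13 h23
    exact (hcol (embCol k)).2.1 _ _ _
      (fun h => h12 (hRinj h)) (fun h => h13 (hRinj h)) (fun h => h23 (hRinj h))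
  -- the cardinality computation
  · set lam : (Fin (n+2) → ℤ) →ₗ[ℤ] ZMod 2 :=
      { toFun := fun x => ((v j₀ b * x a - v j₀ a * x b : ℤ) : ZMod 2)
        map_add' := by intro x y; simp only [Pi.add_apply]; push_cast; ring
        map_smul' := by
          intro z x
          simp only [Pi.smul_apply, smul_eq_mul, RingHom.id_apply, zsmul_eq_mul]
          push_cast; ring } with hlam
    set proj : (Fin (n+2) → ℤ) →ₗ[ℤ] (Fin n → ℤ) :=
      { toFun := fun x => fun r => x (embRow r)
        map_add' := by intro x y; funext r; simp
        map_smul' := by intro z x; funext r; simp } with hproj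
    set f : (Fin (n+2) → ℤ) →ₗ[ℤ] (ZMod 2 × ((Fin n → ℤ) ⧸ Submodule.span ℤ (Set.range v''))) :=
      LinearMap.prod lam ((Submodule.span ℤ (Set.range v'')).mkQ.comp proj) with hf
    have hsurj : Function.Surjective f := by
      rintro ⟨ε, y⟩
      obtain ⟨y', rfl⟩ := Submodule.Quotient.mk_surjective _ y
      have hx2 : ∃ x₂ : Fin (n+2) → ℤ, x₂ a = 0 ∧ x₂ b = 0 ∧ (fun r => x₂ (embRow r)) = y' := by
        refine ⟨fun t => if h : ∃ r, embRow r = t then y' h.choose else 0, ?_, ?_, ?_⟩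
        · show (if h : ∃ r, embRow r = a then y' h.choose else 0) = 0
          rw [dif_neg]; rintro ⟨r, hr⟩; exact hRa r hr
        · show (if h : ∃ r, embRow r = b then y' h.choose else 0) = 0
          rw [dif_neg]; rintro ⟨r, hr⟩; exact hRb r hr
        · funext r
          show (if h : ∃ r', embRow r' = embRow r then y' h.choose else 0) = y' r
          have hex : ∃ r', embRow r' = embRow r := ⟨r, rfl⟩
          rw [dif_pos hex]
          congr 1
          exact hRinj hex.choose_spec
      obtain ⟨x₂, hx2a, hx2b, hx2e⟩ := hx2
      have hfx2 : f x₂ = (0, Submodule.Quotient.mk y') := by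
        rw [hf, LinearMap.prod_apply]
        unfold Function.prod
        rw [Prod.mk.injEq]
        constructor
        · simp only [hlam, LinearMap.coe_mk, AddHom.coe_mk]
          rw [hx2a, hx2b]; norm_num
        · simp only [LinearMap.comp_apply, Submodule.mkQ_apply,
            hproj, LinearMap.coe_mk, AddHom.coe_mk, hx2e]
      have hεcases : ε = 0 ∨ ε = 1 := by revert ε; decide
      rcases hεcases with rfl | rfl
      · exact ⟨x₂, hfx2⟩
      · set x₁ : Fin (n+2) → ℤ := fun t => if t = a then v j₀ b else 0 with hx1
        have hfx1 : f x₁ = (1, 0) := by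
          rw [hf, LinearMap.prod_apply]
          unfold Function.prod
          rw [Prod.mk.injEq]
          constructor
          · simp only [hlam, LinearMap.coe_mk, AddHom.coe_mk, hx1]
            rw [if_neg (show ¬ b = a from Ne.symm hab)]
            simp only [if_true, eq_self_iff_true]
            have h5 : ((v j₀ b * v j₀ b) - v j₀ a * 0 : ℤ) = v j₀ b * v j₀ b := by ring
            rw [h5]
            rcases h0b with h | h <;> rw [h] <;> decide
          · simp only [LinearMap.comp_apply, Submodule.mkQ_apply,
              hproj, LinearMap.coe_mk, AddHom.coe_mk, hx1]
            have h6 : (fun r => if embRow r = a then v j₀ b else (0:ℤ)) = 0 := by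
              funext r; rw [if_neg (hRa r)]; rfl
            rw [h6]
            exact (Submodule.Quotient.mk_eq_zero _).mpr (zero_mem _)
        refine ⟨x₁ + x₂, ?_⟩
        rw [map_add, hfx1, hfx2]
        rw [Prod.mk_add_mk, add_zero, zero_add]
    have hker : LinearMap.ker f = Submodule.span ℤ (Set.range v) := by
      have hfv : ∀ k, f (v k) = 0 := by
        intro k
        rw [hf, LinearMap.prod_apply]
        unfold Function.prod
        rw [Prod.mk_eq_zero]
        constructor
        · simp only [hlam, LinearMap.coe_mk, AddHom.coe_mk]
          by_cases hk0 : k = j₀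
          · rw [hk0]
            have h7 : (v j₀ b * v j₀ a - v j₀ a * v j₀ b : ℤ) = 0 := by ring
            rw [h7]; norm_num
          · by_cases hk' : k = j'
            · rw [hk']
              have hcast : (v j₀ b * v j' a - v j₀ a * v j' b : ℤ) = -d := by
                rw [hd_def]; ring
              rw [hcast, ZMod.intCast_zmod_eq_zero_iff_dvd]
              rcases hd with h | h <;> rw [h] <;> decide
            · rw [hresta k hk0 hk', hrestb k hk0 hk']
              norm_num
        · simp only [LinearMap.comp_apply, Submodule.mkQ_apply,
            hproj, LinearMap.coe_mk, AddHom.coe_mk]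
          by_cases hk0 : k = j₀
          · have h8 : (fun r => v k (embRow r)) = 0 := by
              funext r; rw [hk0, hsupp0 _ (hRa r) (hRb r)]; rfl
            rw [h8]
            exact (Submodule.Quotient.mk_eq_zero _).mpr (zero_mem _)
          · by_cases hk' : k = j'
            · have h8 : (fun r => v k (embRow r)) = 0 := by
                funext r; rw [hk', hsupp' _ (hRa r) (hRb r)]; rfl
              rw [h8]
              exact (Submodule.Quotient.mk_eq_zero _).mpr (zero_mem _)
            · obtain ⟨u, hu⟩ := Fin.exists_succAbove_eq hk0
              have huq : u ≠ q := fun h => hk' (by rw [← hu, h, hq])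
              obtain ⟨k', hk'eq⟩ := Fin.exists_succAbove_eq huq
              have h8 : (fun r => v k (embRow r)) = v'' k' := by
                funext r
                rw [hv'', hembCol]
                simp only []
                rw [hk'eq, hu]
              rw [h8]
              exact (Submodule.Quotient.mk_eq_zero _).mpr (subset_span ⟨k', rfl⟩)
      ext x
      constructor
      · intro hx
        rw [LinearMap.mem_ker] at hx
        rw [hf, LinearMap.prod_apply] at hx
        unfold Function.prod at hx
        rw [Prod.mk_eq_zero] at hx
        have hlamx : lam x = 0 := hx.1
        have hprojx : proj x ∈ Submodule.span ℤ (Set.range v'') := by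
          have h9 := hx.2
          rw [LinearMap.comp_apply, Submodule.mkQ_apply, Submodule.Quotient.mk_eq_zero] at h9
          exact h9
        have hdvd : (2:ℤ) ∣ (v j₀ b * x a - v j₀ a * x b) := by
          have := hlamx
          rw [hlam] at this
          simp only [LinearMap.coe_mk, AddHom.coe_mk] at this
          exact_mod_cast (ZMod.intCast_zmod_eq_zero_iff_dvd _ 2).mp this
        have e1 : (2:ℤ) ∣ (v j' b - v j₀ b) := by
          rcases h'b with h | h <;> rcases h0b with h2 | h2 <;> rw [h, h2] <;> decide
        have e2 : (2:ℤ) ∣ (v j' a - v j₀ a) := by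
          rcases h'a with h | h <;> rcases h0a with h2 | h2 <;> rw [h, h2] <;> decide
        have hdvd1 : (2:ℤ) ∣ (v j' b * x a - v j' a * x b) := by
          have h3 : (v j' b * x a - v j' a * x b : ℤ)
              = (v j' b - v j₀ b) * x a - (v j' a - v j₀ a) * x b
                + (v j₀ b * x a - v j₀ a * x b) := by ring
          rw [h3]
          exact dvd_add (dvd_sub (e1.mul_right _) (e2.mul_right _)) hdvd
        have hdvd2 : (2:ℤ) ∣ (v j₀ a * x b - v j₀ b * x a) := by
          have h3 : (v j₀ a * x b - v j₀ b * x a : ℤ) = -(v j₀ b * x a - v j₀ a * x b) := by ring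
          rw [h3]; exact dvd_neg.mpr hdvd
        have hdd1 : d ∣ (v j' b * x a - v j' a * x b) := by
          rcases hd with h | h <;> rw [h]
          · exact hdvd1
          · exact (neg_dvd).mpr hdvd1
        have hdd2 : d ∣ (v j₀ a * x b - v j₀ b * x a) := by
          rcases hd with h | h <;> rw [h]
          · exact hdvd2
          · exact (neg_dvd).mpr hdvd2
        obtain ⟨c₁, hc₁⟩ := hdd1
        obtain ⟨c₂, hc₂⟩ := hdd2
        rw [mem_span_range_iff_exists_fun] at hprojx
        obtain ⟨cc, hcc⟩ := hprojx
        have hxa : x a = c₁ * v j₀ a + c₂ * v j' a := by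
          apply mul_left_cancel₀ hdne
          rw [hd_def] at hc₁ hc₂ ⊢
          linear_combination (v j₀ a) * hc₁ + (v j' a) * hc₂
        have hxb : x b = c₁ * v j₀ b + c₂ * v j' b := by
          apply mul_left_cancel₀ hdne
          rw [hd_def] at hc₁ hc₂ ⊢
          linear_combination (v j₀ b) * hc₁ + (v j' b) * hc₂
        have hxeq : x = c₁ • v j₀ + c₂ • v j' + ∑ k, cc k • v (embCol k) := by
          funext t
          simp only [Pi.add_apply, Pi.smul_apply, smul_eq_mul, Finset.sum_apply]
          by_cases hta : t = a
          · have hs0 : ∑ k, cc k * v (embCol k) t = 0 :=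
              Finset.sum_eq_zero fun k _ => by rw [hta, hresta _ (hC0 k) (hC' k), mul_zero]
            rw [hs0, hta, hxa, add_zero]
          · by_cases htb : t = b
            · have hs0 : ∑ k, cc k * v (embCol k) t = 0 :=
                Finset.sum_eq_zero fun k _ => by rw [htb, hrestb _ (hC0 k) (hC' k), mul_zero]
              rw [hs0, htb, hxb, add_zero]
            · obtain ⟨r, hr⟩ := hRsurj t hta htb
              have h2 := congrFun hcc r
              simp only [hv'', hproj, LinearMap.coe_mk, AddHom.coe_mk, Finset.sum_apply,
                Pi.smul_apply, smul_eq_mul] at h2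
              rw [← hr, hsupp0 _ (hRa r) (hRb r), hsupp' _ (hRa r) (hRb r)]
              rw [hr] at h2 ⊢
              rw [← hr] at h2 ⊢
              linarith [h2]
        rw [hxeq]
        refine add_mem (add_mem (smul_mem _ _ (subset_span ⟨j₀, rfl⟩))
          (smul_mem _ _ (subset_span ⟨j', rfl⟩))) (sum_mem fun k _ => ?_)
        exact smul_mem _ _ (subset_span ⟨embCol k, rfl⟩)
      · intro hx
        rw [mem_span_range_iff_exists_fun] at hx
        obtain ⟨cc, hcc⟩ := hx
        rw [LinearMap.mem_ker, ← hcc, map_sum]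
        simp only [map_smul, hfv, smul_zero]
        exact Finset.sum_const_zero
    have equiv := (Submodule.quotEquivOfEq _ _ hker.symm).trans
      (f.quotKerEquivOfSurjective hsurj)
    rw [Nat.card_congr equiv.toEquiv, Nat.card_prod]
    congr 1
    rw [Nat.card_eq_fintype_card]
    exact ZMod.card 2



lemma supp_pair {n : ℕ} (w : Fin n → ℤ) (a b : Fin n) (hab : a ≠ b)
    (hcard : (Finset.univ.filter (fun i => w i ≠ 0)).card = 2)
    (ha : w a ≠ 0) (hb : w b ≠ 0) : ∀ t, t ≠ a → t ≠ b → w t = 0 := by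
  intro t hta htb
  by_contra ht
  have h3 : 2 < (Finset.univ.filter (fun i => w i ≠ 0)).card :=
    Finset.two_lt_card_iff.mpr ⟨t, a, b, by simp [ht], by simp [ha], by simp [hb], hta, htb, hab⟩
  omega

lemma no3_of_supp2 {n : ℕ} (w : Fin n → ℤ) (a c : Fin n)
    (h : ∀ t, t ≠ a → t ≠ c → w t = 0) :
    ∀ i₁ i₂ i₃ : Fin n, i₁ ≠ i₂ → i₁ ≠ i₃ → i₂ ≠ i₃ → w i₁ = 0 ∨ w i₂ = 0 ∨ w i₃ = 0 := by
  intro i₁ i₂ i₃ h12 h13 h23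
  have key : (i₁ ≠ a ∧ i₁ ≠ c) ∨ (i₂ ≠ a ∧ i₂ ≠ c) ∨ (i₃ ≠ a ∧ i₃ ≠ c) := by
    by_contra hcon
    push_neg at hcon
    obtain ⟨hc1, hc2, hc3⟩ := hcon
    by_cases h1 : i₁ = a
    · by_cases h2 : i₂ = a
      · exact h12 (h1.trans h2.symm)
      · have h2c := hc2 h2
        by_cases h3 : i₃ = a
        · exact h13 (h1.trans h3.symm)
        · exact h23 ((hc2 h2).trans (hc3 h3).symm)
    · have h1c := hc1 h1
      by_cases h2 : i₂ = c
      · exact h12 (h1c.trans h2.symm)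
      · by_cases h3 : i₃ = c
        · exact h13 (h1c.trans h3.symm)
        · -- i₂ ≠ c so i₂ = a (contrapositive of hc2), i₃ = a likewise
          have h2a : i₂ = a := by by_contra hx; exact h2 (hc2 hx)
          have h3a : i₃ = a := by by_contra hx; exact h3 (hc3 hx)
          exact h23 (h2a.trans h3a.symm)
  rcases key with ⟨u, v⟩ | ⟨u, v⟩ | ⟨u, v⟩
  · exact Or.inl (h _ u v)
  · exact Or.inr (Or.inl (h _ u v))
  · exact Or.inr (Or.inr (h _ u v))

lemma main_card : ∀ n : ℕ, ∀ v : Fin n → (Fin n → ℤ), (∀ k, Col (v k)) →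
    LinearIndependent ℤ v →
    ∃ m : ℕ, 2 * m ≤ n ∧
      Nat.card ((Fin n → ℤ) ⧸ Submodule.span ℤ (Set.range v)) = 2 ^ m := by
  intro n
  induction n using Nat.strong_induction_on with
  | _ n IH =>
    match n, IH with
    | 0, _ =>
      intro v hcol hind
      refine ⟨0, by omega, ?_⟩
      have hsub : Subsingleton ((Fin 0 → ℤ) ⧸ Submodule.span ℤ (Set.range v)) :=
        Function.Surjective.subsingleton (Submodule.Quotient.mk_surjective _)
      rw [pow_zero]
      exact Nat.card_of_subsingleton (Submodule.Quotient.mk 0)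
    | (N+1), IH =>
      intro v hcol hind
      by_cases hsing : ∃ j i0, v j i0 ≠ 0 ∧ ∀ t, t ≠ i0 → v j t = 0
      · -- a singleton column exists: clear the row, then reduce
        obtain ⟨j, i0, hji, hjz⟩ := hsing
        have hs : v j i0 = 1 ∨ v j i0 = -1 := by
          rcases (hcol j).1 i0 with h | h | h
          · exact Or.inl h
          · exact Or.inr h
          · exact absurd h hji
        have hss : v j i0 * v j i0 = 1 := by rcases hs with h | h <;> rw [h] <;> norm_num
        set c : Fin (N+1) → ℤ := fun k => if k = j then 0 else -(v k i0 * v j i0) with hc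
        obtain ⟨hspan_eq, hindp⟩ := update_family v j c (by simp [hc])
        set v₂ : Fin (N+1) → (Fin (N+1) → ℤ) := fun k => v k + c k • v j with hv₂
        have hind₂ : LinearIndependent ℤ v₂ := hindp hind
        have hv₂j : v₂ j = v j := by
          funext t
          simp [hv₂, hc]
        have hv₂other : ∀ k, k ≠ j → ∀ t, t ≠ i0 → v₂ k t = v k t := by
          intro k hk t ht
          simp only [hv₂, Pi.add_apply, Pi.smul_apply, smul_eq_mul]
          rw [hjz t ht, mul_zero, add_zero]
        have hz₂ : ∀ k, k ≠ j → v₂ k i0 = 0 := by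
          intro k hk
          simp only [hv₂, hc, Pi.add_apply, Pi.smul_apply, smul_eq_mul, if_neg hk]
          linear_combination (-(v k i0)) * hss
        have hs₂ : v₂ j i0 = 1 ∨ v₂ j i0 = -1 := by rw [hv₂j]; exact hs
        have hcol₂ : ∀ k, Col (v₂ k) := by
          intro k
          by_cases hk : k = j
          · rw [hk, hv₂j]; exact hcol j
          · have hzz : ∀ t, v k t = 0 → v₂ k t = 0 := by
              intro t hvt
              by_cases ht : t = i0
              · rw [ht]; exact hz₂ k hk
              · rw [hv₂other k hk t ht]; exact hvt
            refine ⟨?_, ?_, hind₂.ne_zero k⟩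
            · intro t
              by_cases ht : t = i0
              · rw [ht, hz₂ k hk]; right; right; rfl
              · rw [hv₂other k hk t ht]; exact (hcol k).1 t
            · intro i₁ i₂ i₃ h12 h13 h23
              rcases (hcol k).2.1 i₁ i₂ i₃ h12 h13 h23 with h | h | h
              · exact Or.inl (hzz _ h)
              · exact Or.inr (Or.inl (hzz _ h))
              · exact Or.inr (Or.inr (hzz _ h))
        obtain ⟨v', hcol', hind', hcard⟩ := step1 v₂ i0 j hs₂ hz₂ hcol₂ hind₂
        obtain ⟨m, hm, hcardm⟩ := IH N (by omega) v' hcol' hind'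
        refine ⟨m, by omega, ?_⟩
        rw [← hspan_eq, hcard, hcardm]
      · -- no singleton column
        push_neg at hsing
        -- every row is touched by some column
        have hrow : ∀ i, ∃ k, v k i ≠ 0 := by
          intro i
          by_contra hno
          push_neg at hno
          set w : Fin (N+1) → (Fin N → ℤ) := fun k r => v k (i.succAbove r) with hw
          have hwind : LinearIndependent ℤ w := by
            rw [Fintype.linearIndependent_iff]
            intro g hg
            have hgv : ∑ k, g k • v k = 0 := by
              funext t
              simp only [Finset.sum_apply, Pi.smul_apply, smul_eq_mul, Pi.zero_apply]
              by_cases ht : t = i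
              · exact Finset.sum_eq_zero fun k _ => by rw [ht, hno k, mul_zero]
              · obtain ⟨r, hr⟩ := Fin.exists_succAbove_eq ht
                have h2 := congrFun hg r
                simp only [hw, Finset.sum_apply, Pi.smul_apply, smul_eq_mul,
                  Pi.zero_apply] at h2
                rw [← hr]; exact h2
            exact fun k => (Fintype.linearIndependent_iff.mp hind) g hgv k
          have hle := hwind.fintype_card_le_finrank
          simp only [Fintype.card_fin] at hle
          have : Module.finrank ℤ (Fin N → ℤ) = N := by simp
          omega
        -- column supports have exactly two elements
        have hsupp2 : ∀ j, (Finset.univ.filter (fun i => v j i ≠ 0)).card = 2 := by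
          intro j
          have hub : (Finset.univ.filter (fun i => v j i ≠ 0)).card ≤ 2 := by
            by_contra hgt
            push_neg at hgt
            obtain ⟨x, y, z, hx, hy, hz, hxy, hxz, hyz⟩ := Finset.two_lt_card_iff.mp hgt
            simp only [Finset.mem_filter, Finset.mem_univ, true_and] at hx hy hz
            rcases (hcol j).2.1 x y z hxy hxz hyz with h | h | h
            exacts [hx h, hy h, hz h]
          have hlb : 1 < (Finset.univ.filter (fun i => v j i ≠ 0)).card := by
            obtain ⟨A, hA⟩ := Function.ne_iff.mp (hcol j).2.2
            simp only [Pi.zero_apply] at hA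
            obtain ⟨B, hBA, hB⟩ := hsing j A hA
            exact Finset.one_lt_card.mpr
              ⟨A, by simp [hA], B, by simp [hB], Ne.symm hBA⟩
          omega
        by_cases hdeg1 : ∃ i j, v j i ≠ 0 ∧ ∀ k, k ≠ j → v k i = 0
        · -- a row of degree one exists: reduce directly
          obtain ⟨i, j, hji, hz⟩ := hdeg1
          have hs : v j i = 1 ∨ v j i = -1 := by
            rcases (hcol j).1 i with h | h | h
            · exact Or.inl h
            · exact Or.inr h
            · exact absurd h hji
          obtain ⟨v', hcol', hind', hcard⟩ := step1 v i j hs hz hcol hind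
          obtain ⟨m, hm, hcardm⟩ := IH N (by omega) v' hcol' hind'
          exact ⟨m, by omega, by rw [hcard, hcardm]⟩
        · -- all rows have degree exactly 2
          push_neg at hdeg1
          have hdeg_ge : ∀ i, 1 < (Finset.univ.filter (fun k => v k i ≠ 0)).card := by
            intro i
            obtain ⟨k₁, hk₁⟩ := hrow i
            obtain ⟨k₂, hk₂ne, hk₂⟩ := hdeg1 i k₁ hk₁
            exact Finset.one_lt_card.mpr ⟨k₁, by simp [hk₁], k₂, by simp [hk₂], Ne.symm hk₂ne⟩
          have hdouble : ∑ i : Fin (N+1), (Finset.univ.filter (fun k => v k i ≠ 0)).card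
              = ∑ j : Fin (N+1), (Finset.univ.filter (fun i => v j i ≠ 0)).card := by
            simp only [Finset.card_filter]
            exact Finset.sum_comm
          have hsum2 : ∑ j : Fin (N+1), (Finset.univ.filter (fun i => v j i ≠ 0)).card
              = 2 * (N+1) := by
            rw [Finset.sum_congr rfl (fun j _ => hsupp2 j)]
            simp [Finset.sum_const, mul_comm]
          have hdeg_eq : ∀ i, (Finset.univ.filter (fun k => v k i ≠ 0)).card = 2 := by
            have hle : ∀ i ∈ Finset.univ, 2 ≤ (Finset.univ.filter (fun k => v k i ≠ 0)).card :=
              fun i _ => hdeg_ge i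
            have heq : ∑ i : Fin (N+1), (2:ℕ)
                = ∑ i : Fin (N+1), (Finset.univ.filter (fun k => v k i ≠ 0)).card := by
              rw [hdouble, hsum2]
              simp [Finset.sum_const, mul_comm]
            intro i
            exact ((Finset.sum_eq_sum_iff_of_le hle).mp heq i (Finset.mem_univ i)).symm
          -- pick the first column and its two support rows
          set j₀ : Fin (N+1) := 0 with hj₀
          obtain ⟨a, ha⟩ := Function.ne_iff.mp (hcol j₀).2.2
          simp only [Pi.zero_apply] at ha
          obtain ⟨b, hba, hb⟩ := hsing j₀ a ha
          -- a second column through row b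
          have hj' : ∃ j', j' ≠ j₀ ∧ v j' b ≠ 0 := by
            by_contra hno
            push_neg at hno
            have hsub : (Finset.univ.filter (fun k => v k b ≠ 0)) ⊆ {j₀} := by
              intro k hk
              simp only [Finset.mem_filter, Finset.mem_univ, true_and] at hk
              simp only [Finset.mem_singleton]
              by_contra hkj
              exact hk (hno k hkj)
            have := Finset.card_le_card hsub
            rw [hdeg_eq b] at this
            simp at this
          obtain ⟨j', hj'ne, hj'b⟩ := hj'
          have hsuppj₀ : ∀ t, t ≠ a → t ≠ b → v j₀ t = 0 :=
            supp_pair (v j₀) a b (Ne.symm hba) (hsupp2 j₀) ha hb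
          have hrestb : ∀ k, k ≠ j₀ → k ≠ j' → v k b = 0 :=
            supp_pair (fun k => v k b) j₀ j' (Ne.symm hj'ne) (hdeg_eq b) hb hj'b
          by_cases hja : v j' a = 0
          · -- path case: one elementary operation makes row b have degree 1
            obtain ⟨cR, hcb, hcnz⟩ := hsing j' b hj'b
            have hca : cR ≠ a := by
              intro h; rw [h] at hcnz; exact hcnz hja
            have hsuppj' : ∀ t, t ≠ b → t ≠ cR → v j' t = 0 :=
              supp_pair (v j') b cR (Ne.symm hcb) (hsupp2 j') hj'b hcnz
            have h0b : v j₀ b = 1 ∨ v j₀ b = -1 := by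
              rcases (hcol j₀).1 b with h | h | h
              · exact Or.inl h
              · exact Or.inr h
              · exact absurd h hb
            have hssb : v j₀ b * v j₀ b = 1 := by rcases h0b with h | h <;> rw [h] <;> norm_num
            set cc : Fin (N+1) → ℤ :=
              fun k => if k = j' then -(v j' b * v j₀ b) else 0 with hcc
            have hccj₀ : cc j₀ = 0 := by
              simp only [hcc]
              rw [if_neg (Ne.symm hj'ne)]
            obtain ⟨hspan_eq, hindp⟩ := update_family v j₀ cc hccj₀
            set v₂ : Fin (N+1) → (Fin (N+1) → ℤ) := fun k => v k + cc k • v j₀ with hv₂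
            have hind₂ : LinearIndependent ℤ v₂ := hindp hind
            have hv₂eq : ∀ k, k ≠ j' → v₂ k = v k := by
              intro k hk
              funext t
              simp [hv₂, hcc, if_neg hk]
            have hccj' : cc j' = -(v j' b * v j₀ b) := by
              simp only [hcc, if_true, eq_self_iff_true]
            have hv₂j' : ∀ t, v₂ j' t = v j' t - (v j' b * v j₀ b) * v j₀ t := by
              intro t
              simp only [hv₂, Pi.add_apply, Pi.smul_apply, smul_eq_mul, hccj']
              ring
            have hv₂j'b : v₂ j' b = 0 := by
              rw [hv₂j' b]
              linear_combination (-(v j' b)) * hssb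
            have hz₂ : ∀ k, k ≠ j₀ → v₂ k b = 0 := by
              intro k hk
              by_cases hkj' : k = j'
              · rw [hkj']; exact hv₂j'b
              · rw [hv₂eq k hkj']
                exact hrestb k hk hkj'
            have hs₂ : v₂ j₀ b = 1 ∨ v₂ j₀ b = -1 := by
              rw [hv₂eq j₀ (Ne.symm hj'ne)]; exact h0b
            have hsupp₂j' : ∀ t, t ≠ a → t ≠ cR → v₂ j' t = 0 := by
              intro t hta htc
              by_cases htb : t = b
              · rw [htb]; exact hv₂j'b
              · rw [hv₂j' t, hsuppj' t htb htc, hsuppj₀ t hta htb]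
                ring
            have hcol₂ : ∀ k, Col (v₂ k) := by
              intro k
              by_cases hk : k = j'
              · refine ⟨?_, ?_, hind₂.ne_zero k⟩
                · intro t
                  rw [hk]
                  by_cases hta : t = a
                  · rw [hta, hv₂j' a, hja]
                    have h'b : v j' b = 1 ∨ v j' b = -1 := by
                      rcases (hcol j').1 b with h | h | h
                      · exact Or.inl h
                      · exact Or.inr h
                      · exact absurd h hj'b
                    have h0a : v j₀ a = 1 ∨ v j₀ a = -1 := by
                      rcases (hcol j₀).1 a with h | h | h
                      · exact Or.inl h
                      · exact Or.inr h
                      · exact absurd h ha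
                    rcases h'b with h1 | h1 <;> rcases h0b with h2 | h2 <;>
                      rcases h0a with h3 | h3 <;> rw [h1, h2, h3] <;> norm_num
                  · by_cases htc : t = cR
                    · have : v₂ j' t = v j' t := by
                        rw [hv₂j' t, hsuppj₀ t hta (by rw [htc]; exact hcb)]
                        ring
                      rw [this]
                      exact (hcol j').1 t
                    · rw [hsupp₂j' t hta htc]; right; right; rfl
                · rw [hk]
                  exact no3_of_supp2 (v₂ j') a cR hsupp₂j'
              · rw [hv₂eq k hk]
                exact hcol k
            obtain ⟨v', hcol', hind', hcard⟩ := step1 v₂ b j₀ hs₂ hz₂ hcol₂ hind₂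
            obtain ⟨m, hm, hcardm⟩ := IH N (by omega) v' hcol' hind'
            refine ⟨m, by omega, ?_⟩
            rw [← hspan_eq, hcard, hcardm]
          · -- 2-cycle case
            push_neg at hja
            have hresta : ∀ k, k ≠ j₀ → k ≠ j' → v k a = 0 :=
              supp_pair (fun k => v k a) j₀ j' (Ne.symm hj'ne) (hdeg_eq a) ha hja
            have hsuppj' : ∀ t, t ≠ a → t ≠ b → v j' t = 0 :=
              supp_pair (v j') a b (Ne.symm hba) (hsupp2 j') hja hj'b
            have hpm : ∀ (jj : Fin (N+1)) (tt : Fin (N+1)), v jj tt ≠ 0 →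
                v jj tt = 1 ∨ v jj tt = -1 := by
              intro jj tt hne
              rcases (hcol jj).1 tt with h | h | h
              · exact Or.inl h
              · exact Or.inr h
              · exact absurd h hne
            clear_value j₀
            have hN : N ≠ 0 := by
              rintro rfl
              exact hba (Fin.ext (by omega))
            obtain ⟨M, rfl⟩ := Nat.exists_eq_succ_of_ne_zero hN
            obtain ⟨v'', hcol'', hind'', hcard⟩ := step2 v a b j₀ j' (Ne.symm hba)
              (Ne.symm hj'ne) (hpm j₀ a ha) (hpm j₀ b hb) (hpm j' a hja) (hpm j' b hj'b)
              hsuppj₀ hsuppj' hresta hrestb hcol hind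
            obtain ⟨m', hm', hcardm⟩ := IH M (by omega) v'' hcol'' hind''
            refine ⟨m' + 1, by omega, ?_⟩
            rw [hcard, hcardm, pow_succ]
            ring


/-- The integer version of the lattice Dₙ. -/
def D0 (n : ℕ) : Submodule ℤ (Fin n → ℤ) where
  carrier := {c | 2 ∣ ∑ i, c i}
  zero_mem' := by simp
  add_mem' := by
    intro x y hx hy
    simpa [Finset.sum_add_distrib] using dvd_add hx hy
  smul_mem' := by
    intro z x hx
    simpa [Finset.mul_sum] using hx.mul_left z

/-- Coordinatewise cast `ℤⁿ → ℝⁿ` as a `ℤ`-linear map. -/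
def castLM (n : ℕ) : (Fin n → ℤ) →ₗ[ℤ] EuclideanSpace ℝ (Fin n) where
  toFun c := WithLp.toLp 2 (fun i => (c i : ℝ))
  map_add' x y := by ext i; simp [Pi.add_apply]
  map_smul' z x := by ext i; simp [Pi.smul_apply]

lemma castLM_injective (n : ℕ) : Function.Injective (castLM n) := by
  intro x y h
  funext i
  have h2 : ((x i : ℤ) : ℝ) = ((y i : ℤ) : ℝ) := congrArg (fun v : EuclideanSpace ℝ (Fin n) => v i) h
  exact_mod_cast h2

lemma Dlattice_eq_map (n : ℕ) : Dlattice n = Submodule.map (castLM n) (D0 n) := by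
  ext x
  constructor
  · rintro ⟨c, hc, hxc⟩
    exact ⟨c, hc, by ext i; exact (hxc i).symm⟩
  · rintro ⟨c, hc, rfl⟩
    exact ⟨c, hc, fun i => rfl⟩

lemma inner_cast (n : ℕ) (c : Fin n → ℤ) :
    ⟪castLM n c, castLM n c⟫ = ((∑ i, c i * c i : ℤ) : ℝ) := by
  rw [PiLp.inner_apply]
  push_cast
  refine Finset.sum_congr rfl fun i _ => ?_
  simp [castLM, RCLike.inner_apply, sq]

lemma D_two_le {n : ℕ} (c : Fin n → ℤ) (hc : 2 ∣ ∑ i, c i) (hne : c ≠ 0) :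
    2 ≤ ∑ i, c i * c i := by
  obtain ⟨i₀, hi₀⟩ := Function.ne_iff.mp hne
  simp only [Pi.zero_apply] at hi₀
  have h1 : 1 ≤ c i₀ * c i₀ := mul_self_pos.mpr hi₀
  have hle : c i₀ * c i₀ ≤ ∑ i, c i * c i :=
    Finset.single_le_sum (fun i _ => mul_self_nonneg (c i)) (Finset.mem_univ i₀)
  have heven : 2 ∣ (∑ i, c i * c i) - ∑ i, c i := by
    rw [← Finset.sum_sub_distrib]
    refine Finset.dvd_sum fun i _ => ?_
    have h2 : c i * c i - c i = (c i - 1) * ((c i - 1) + 1) := by ring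
    rw [h2]
    exact (Int.even_mul_succ_self (c i - 1)).two_dvd
  have := dvd_add heven hc
  rw [sub_add_cancel] at this
  omega

lemma latticeMin_D {n : ℕ} (hn : 2 ≤ n) : latticeMin (Dlattice n) = 2 := by
  set i0 : Fin n := ⟨0, by omega⟩ with hi0
  set i1 : Fin n := ⟨1, by omega⟩ with hi1
  have h01 : i0 ≠ i1 := by
    intro h
    have := congrArg Fin.val h
    simp [hi0, hi1] at this
  set c₀ : Fin n → ℤ := fun i => (if i = i0 then 1 else 0) + (if i = i1 then 1 else 0) with hc₀
  have hsum : ∑ i, c₀ i = 2 := by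
    simp only [hc₀, Finset.sum_add_distrib, Finset.sum_ite_eq' Finset.univ,
      Finset.mem_univ, if_true]
    norm_num
  have hsumsq : ∑ i, c₀ i * c₀ i = 2 := by
    have : ∀ i, c₀ i * c₀ i = c₀ i := by
      intro i
      by_cases h0 : i = i0 <;> by_cases h1 : i = i1 <;>
        simp [hc₀, h0, h1] <;> simp_all
    rw [Finset.sum_congr rfl (fun i _ => this i), hsum]
  have hmem : (2:ℝ) ∈ {r : ℝ | ∃ x ∈ Dlattice n, x ≠ 0 ∧ ⟪x, x⟫ = r} := by
    refine ⟨castLM n c₀, ⟨c₀, by rw [hsum], fun i => rfl⟩, ?_, ?_⟩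
    · intro h
      have h2 : (castLM n c₀) i0 = (0 : EuclideanSpace ℝ (Fin n)) i0 :=
        congrArg (fun v : EuclideanSpace ℝ (Fin n) => v i0) h
      have : c₀ i0 = 1 := by simp [hc₀, h01]
      rw [show ((0 : EuclideanSpace ℝ (Fin n)) i0) = 0 from rfl] at h2
      change ((c₀ i0 : ℤ) : ℝ) = 0 at h2
      rw [this] at h2
      norm_num at h2
    · rw [inner_cast, hsumsq]; norm_num
  apply IsLeast.csInf_eq
  constructor
  · exact hmem
  · rintro r ⟨x, hxD, hxne, rfl⟩
    obtain ⟨c, hc, hxc⟩ := hxD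
    have hxeq : x = castLM n c := by ext i; exact hxc i
    have hcne : c ≠ 0 := by
      intro h
      apply hxne
      rw [hxeq, h]
      ext i
      simp [castLM]
    rw [hxeq, inner_cast]
    exact_mod_cast D_two_le c hc hcne

lemma minimal_struct {n : ℕ} (hn : 2 ≤ n) (x : EuclideanSpace ℝ (Fin n))
    (hx : x ∈ minimalVectors (Dlattice n)) :
    ∃ c : Fin n → ℤ, x = castLM n c ∧ 2 ∣ ∑ i, c i ∧ Col c := by
  obtain ⟨hxD, hxne, hxmin⟩ := hx
  rw [latticeMin_D hn] at hxmin
  obtain ⟨c, hc, hxc⟩ := hxD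
  have hxeq : x = castLM n c := by ext i; exact hxc i
  have hcne : c ≠ 0 := by
    intro h
    apply hxne
    rw [hxeq, h]
    ext i
    simp [castLM]
  rw [hxeq, inner_cast] at hxmin
  have hsumsq : ∑ i, c i * c i = 2 := by exact_mod_cast hxmin
  refine ⟨c, hxeq, hc, ?_, ?_, hcne⟩
  · intro i
    have hle : c i * c i ≤ 2 := by
      rw [← hsumsq]
      exact Finset.single_le_sum (fun t _ => mul_self_nonneg (c t)) (Finset.mem_univ i)
    have h1 : c i ≤ 1 := by nlinarith
    have h2 : -1 ≤ c i := by nlinarith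
    omega
  · intro i₁ i₂ i₃ h12 h13 h23
    by_contra hcon
    push_neg at hcon
    obtain ⟨hn1, hn2, hn3⟩ := hcon
    have hsub : ({i₁, i₂, i₃} : Finset (Fin n)) ⊆ Finset.univ := Finset.subset_univ _
    have hsum3 : ∑ i ∈ ({i₁, i₂, i₃} : Finset (Fin n)), c i * c i ≤ ∑ i, c i * c i :=
      Finset.sum_le_sum_of_subset_of_nonneg hsub (fun i _ _ => mul_self_nonneg (c i))
    have hexp : ∑ i ∈ ({i₁, i₂, i₃} : Finset (Fin n)), c i * c i
        = c i₁ * c i₁ + (c i₂ * c i₂ + c i₃ * c i₃) := by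
      rw [Finset.sum_insert (by simp [h12, h13]), Finset.sum_insert (by simp [h23]),
        Finset.sum_singleton]
    have hb1 : 1 ≤ c i₁ * c i₁ := mul_self_pos.mpr hn1
    have hb2 : 1 ≤ c i₂ * c i₂ := mul_self_pos.mpr hn2
    have hb3 : 1 ≤ c i₃ * c i₃ := mul_self_pos.mpr hn3
    omega


lemma D0_index {n : ℕ} (hn : 2 ≤ n) : (D0 n).toAddSubgroup.index = 2 := by
  set φ : (Fin n → ℤ) →+ ZMod 2 :=
    { toFun := fun x => ((∑ i, x i : ℤ) : ZMod 2)
      map_zero' := by simp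
      map_add' := by
        intro x y
        simp only [Pi.add_apply, Finset.sum_add_distrib]
        push_cast
        ring } with hφ
  have hker : φ.ker = (D0 n).toAddSubgroup := by
    ext x
    rw [AddMonoidHom.mem_ker, Submodule.mem_toAddSubgroup]
    show ((∑ i, x i : ℤ) : ZMod 2) = 0 ↔ x ∈ D0 n
    rw [ZMod.intCast_zmod_eq_zero_iff_dvd]
    constructor
    · intro h2
      show 2 ∣ ∑ i, x i
      exact_mod_cast h2
    · intro h2
      exact_mod_cast (show 2 ∣ ∑ i, x i from h2)
  have hsurj : Function.Surjective φ := by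
    intro z
    have hz : z = 0 ∨ z = 1 := by revert z; decide
    rcases hz with rfl | rfl
    · exact ⟨0, by simp [hφ]⟩
    · refine ⟨fun i => if i = ⟨0, by omega⟩ then 1 else 0, ?_⟩
      show ((∑ i, (if i = (⟨0, by omega⟩ : Fin n) then (1:ℤ) else 0) : ℤ) : ZMod 2) = 1
      rw [Finset.sum_ite_eq' Finset.univ]
      simp
  show Nat.card ((Fin n → ℤ) ⧸ (D0 n).toAddSubgroup) = 2
  rw [← hker]
  rw [Nat.card_congr (QuotientAddGroup.quotientKerEquivOfSurjective φ hsurj).toEquiv]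
  exact Nat.card_zmod 2


/-- For every `n ≥ 2`, every Minkowskian sublattice `Λ'` of the root lattice
`Dₙ` has index `[Dₙ : Λ'] = 2ᵏ` for some `k` with `0 ≤ k ≤ ⌊(n − 2)/2⌋`. -/
theorem index_of_minkowskian_sublattice_Dn {n : ℕ} (hn : 2 ≤ n)
    (Λ' : Submodule ℤ (EuclideanSpace ℝ (Fin n)))
    (h : IsMinkowskian (Dlattice n) Λ') :
    ∃ k ≤ (n - 2) / 2, subIndex (Dlattice n) Λ' = 2 ^ k := by
  obtain ⟨e, hinde, hemin, hΛ'⟩ := h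
  choose c hc1 hc2 hc3 using fun k => minimal_struct hn (e k) (hemin k)
  have hindc : LinearIndependent ℤ c := by
    rw [Fintype.linearIndependent_iff]
    intro g hg
    have hreal : ∑ k, (g k : ℝ) • e k = 0 := by
      have hsmul : ∀ k, (g k : ℝ) • e k = castLM n (g k • c k) := by
        intro k
        rw [hc1 k]
        ext i
        show (g k : ℝ) * ((c k i : ℤ) : ℝ) = (((g k • c k) i : ℤ) : ℝ)
        rw [Pi.smul_apply, smul_eq_mul]
        push_cast
        ring
      rw [Finset.sum_congr rfl (fun k _ => hsmul k), ← map_sum, hg, map_zero]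
    intro k
    have := Fintype.linearIndependent_iff.mp hinde (fun k => (g k : ℝ)) hreal k
    exact_mod_cast this
  have hL0D : Submodule.span ℤ (Set.range c) ≤ D0 n := by
    rw [Submodule.span_le]
    rintro _ ⟨k, rfl⟩
    exact hc2 k
  obtain ⟨m, hm, hcard⟩ := main_card n c hc3 hindc
  set L0 := Submodule.span ℤ (Set.range c) with hL0
  have hmapL : Submodule.map (castLM n) L0 = Λ' := by
    rw [hΛ', hL0, Submodule.map_span, ← Set.range_comp,
      show ⇑(castLM n) ∘ c = e from funext fun k => (hc1 k).symm]
  have hD := Dlattice_eq_map n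
  set eDD : (D0 n) ≃ₗ[ℤ] (Dlattice n) :=
    (Submodule.equivMapOfInjective (castLM n) (castLM_injective n) (D0 n)).trans
      (LinearEquiv.ofEq _ _ hD.symm) with heDD
  have heDDapply : ∀ x : D0 n,
      ((eDD x : Dlattice n) : EuclideanSpace ℝ (Fin n)) = castLM n (x : Fin n → ℤ) := by
    intro x
    rw [heDD, LinearEquiv.trans_apply, LinearEquiv.coe_ofEq_apply,
      Submodule.coe_equivMapOfInjective_apply]
  have hmapQ : Submodule.map (eDD : (D0 n) →ₗ[ℤ] (Dlattice n))
      (Submodule.comap (D0 n).subtype L0) = Submodule.comap (Dlattice n).subtype Λ' := by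
    ext y
    constructor
    · rintro ⟨x, hx, rfl⟩
      simp only [SetLike.mem_coe, Submodule.mem_comap, Submodule.subtype_apply] at hx ⊢
      rw [LinearEquiv.coe_coe, heDDapply x, ← hmapL]
      exact ⟨(x : Fin n → ℤ), hx, rfl⟩
    · intro hy
      simp only [Submodule.mem_comap, Submodule.subtype_apply] at hy
      rw [← hmapL] at hy
      obtain ⟨x, hxL0, hxy⟩ := hy
      have hxD0 : x ∈ D0 n := hL0D hxL0
      refine ⟨⟨x, hxD0⟩, ?_, ?_⟩
      · simp only [SetLike.mem_coe, Submodule.mem_comap, Submodule.subtype_apply]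
        exact hxL0
      · apply Subtype.ext
        rw [LinearEquiv.coe_coe, heDDapply]
        exact hxy
  have hquot := Submodule.Quotient.equiv (Submodule.comap (D0 n).subtype L0)
      (Submodule.comap (Dlattice n).subtype Λ') eDD hmapQ
  have hSeq : subIndex (Dlattice n) Λ'
      = Nat.card ((D0 n) ⧸ Submodule.comap (D0 n).subtype L0) :=
    (Nat.card_congr hquot.toEquiv).symm
  have hle : L0.toAddSubgroup ≤ (D0 n).toAddSubgroup := fun x hx => hL0D hx
  have hmul := AddSubgroup.relIndex_mul_index hle
  have hrel : L0.toAddSubgroup.relIndex (D0 n).toAddSubgroup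
      = Nat.card ((D0 n) ⧸ Submodule.comap (D0 n).subtype L0) := rfl
  have hindex : L0.toAddSubgroup.index = Nat.card ((Fin n → ℤ) ⧸ L0) := rfl
  rw [hrel, hindex, D0_index hn, hcard] at hmul
  have hm1 : 1 ≤ m := by
    rcases Nat.eq_zero_or_pos m with rfl | hpos
    · rw [pow_zero] at hmul; omega
    · exact hpos
  refine ⟨m - 1, ?_, ?_⟩
  · rw [Nat.le_div_iff_mul_le (by norm_num : (0:ℕ) < 2)]
    omega
  · rw [hSeq]
    have h2 : (2:ℕ) ^ m = 2 ^ (m - 1) * 2 := by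
      rw [← pow_succ]
      congr 1
      omega
    omega
end
end

section
/- For every n ≥ 2 and every integer k with 0 ≤ k ≤ ⌊(n−2)/2⌋, the root lattice Dₙ possesses a Minkowskian sublattice Λ' with [Dₙ : Λ'] = 2^k. Hence the index system of Dₙ (the set of all possible abstract-group structures of quotients Dₙ/Λ' over Minkowskian sublattices Λ') is exactly {1, 2, 2², …, 2^⌊(n−2)/2⌋} as a set of orders, each quotient being realized. -/
open scoped BigOperators RealInnerProductSpace

noncomputable section

namespace DnAux

/-! ### Sums of functions with small support -/

lemma sum_supp_one {M : Type*} [AddCommMonoid M] {n : ℕ} (f : Fin n → M) (p : ℕ) (hp : p < n)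
    (h0 : ∀ i : Fin n, i.val ≠ p → f i = 0) :
    ∑ i, f i = f ⟨p, hp⟩ := by
  rw [← Finset.sum_subset (Finset.subset_univ ({⟨p, hp⟩} : Finset (Fin n)))
    (fun x _ hx => h0 x (by simpa [Fin.ext_iff] using hx))]
  simp

lemma sum_supp_two {M : Type*} [AddCommMonoid M] {n : ℕ} (f : Fin n → M) (p q : ℕ)
    (hp : p < n) (hq : q < n) (hpq : p ≠ q)
    (h0 : ∀ i : Fin n, i.val ≠ p → i.val ≠ q → f i = 0) :
    ∑ i, f i = f ⟨p, hp⟩ + f ⟨q, hq⟩ := by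
  rw [← Finset.sum_subset (Finset.subset_univ ({⟨p, hp⟩, ⟨q, hq⟩} : Finset (Fin n)))
    (fun x _ hx => by
      simp only [Finset.mem_insert, Finset.mem_singleton, Fin.ext_iff] at hx
      push_neg at hx
      exact h0 x hx.1 hx.2)]
  rw [Finset.sum_pair (by simp [Fin.ext_iff, hpq])]

lemma sum_supp_three {M : Type*} [AddCommMonoid M] {n : ℕ} (f : Fin n → M) (p q r : ℕ)
    (hp : p < n) (hq : q < n) (hr : r < n) (hpq : p ≠ q) (hpr : p ≠ r) (hqr : q ≠ r)
    (h0 : ∀ i : Fin n, i.val ≠ p → i.val ≠ q → i.val ≠ r → f i = 0) :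
    ∑ i, f i = f ⟨p, hp⟩ + f ⟨q, hq⟩ + f ⟨r, hr⟩ := by
  rw [← Finset.sum_subset (Finset.subset_univ ({⟨p, hp⟩, ⟨q, hq⟩, ⟨r, hr⟩} : Finset (Fin n)))
    (fun x _ hx => by
      simp only [Finset.mem_insert, Finset.mem_singleton, Fin.ext_iff] at hx
      push_neg at hx
      exact h0 x hx.1 hx.2.1 hx.2.2)]
  rw [Finset.sum_insert (by simp [Fin.ext_iff, hpq, hpr]),
    Finset.sum_pair (by simp [Fin.ext_iff, hqr]), add_assoc]

lemma inner_self {n : ℕ} (x : EuclideanSpace ℝ (Fin n)) : ⟪x, x⟫ = ∑ i, x i * x i := by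
  rw [PiLp.inner_apply]
  exact Finset.sum_congr rfl (fun i _ => by simp only [RCLike.inner_apply, conj_trivial])

/-! ### Integer vectors supported at two points -/

lemma mem_D_of_supp_two {n : ℕ} (g : Fin n → ℤ) (p q : ℕ) (hp : p < n) (hq : q < n)
    (hpq : p ≠ q) (h0 : ∀ i : Fin n, i.val ≠ p → i.val ≠ q → g i = 0)
    (heven : 2 ∣ g ⟨p, hp⟩ + g ⟨q, hq⟩) :
    (WithLp.toLp 2 (fun j => (g j : ℝ)) : EuclideanSpace ℝ (Fin n)) ∈ Dlattice n := by
  refine ⟨g, ?_, fun i => rfl⟩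
  rw [sum_supp_two g p q hp hq hpq h0]; exact heven

lemma normsq_supp_two {n : ℕ} (g : Fin n → ℤ) (p q : ℕ) (hp : p < n) (hq : q < n)
    (hpq : p ≠ q) (h0 : ∀ i : Fin n, i.val ≠ p → i.val ≠ q → g i = 0)
    (hvp : g ⟨p, hp⟩ = 1) (hvq : g ⟨q, hq⟩ = 1 ∨ g ⟨q, hq⟩ = -1) :
    ⟪(show EuclideanSpace ℝ (Fin n) from WithLp.toLp 2 (fun j => (g j : ℝ))),
      (show EuclideanSpace ℝ (Fin n) from WithLp.toLp 2 (fun j => (g j : ℝ)))⟫ = 2 := by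
  rw [inner_self]
  rw [sum_supp_two (fun i => ((g i : ℝ) * (g i : ℝ))) p q hp hq hpq
    (fun i h1 h2 => by rw [h0 i h1 h2]; simp)]
  rcases hvq with h | h <;> rw [hvp, h] <;> norm_num

/-! ### The lattice minimum of `Dₙ` -/

lemma latticeMin_D {n : ℕ} (hn : 2 ≤ n) : latticeMin (Dlattice n) = 2 := by
  have hlb : ∀ r ∈ {r : ℝ | ∃ x ∈ Dlattice n, x ≠ 0 ∧ ⟪x, x⟫ = r}, (2:ℝ) ≤ r := by
    rintro r ⟨x, ⟨c, hc, hxc⟩, hx0, rfl⟩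
    have hex : ∃ i, c i ≠ 0 := by
      by_contra hall
      push_neg at hall
      exact hx0 (by ext j; rw [hxc j, hall j]; simp)
    obtain ⟨i, hi⟩ := hex
    rw [inner_self]
    have hcast : ∀ j : Fin n, x j * x j = ((c j * c j : ℤ) : ℝ) := by
      intro j; rw [hxc j]; push_cast; ring
    rw [Finset.sum_congr rfl (fun j _ => hcast j), ← Int.cast_sum]
    have : (2 : ℤ) ≤ ∑ j, c j * c j := by
      by_cases hone : ∀ j, j ≠ i → c j = 0
      · have hsum : ∑ j, c j = c i := by
          rw [← Finset.sum_subset (Finset.subset_univ ({i} : Finset (Fin n)))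
            (fun x _ hx => hone x (by simpa using hx))]
          simp
        have h2 : 2 ∣ c i := hsum ▸ hc
        have h4 : 2 ≤ |c i| := by
          rcases h2 with ⟨d, hd⟩
          have : d ≠ 0 := by rintro rfl; simp at hd; exact hi hd
          rw [hd, abs_mul]; have := Int.one_le_abs this; simp; omega
        calc (2:ℤ) ≤ |c i| := h4
          _ ≤ |c i| * |c i| := le_mul_of_one_le_right (abs_nonneg _) (by omega)
          _ = c i * c i := by rw [← abs_mul, abs_mul_self]
          _ ≤ ∑ j, c j * c j := Finset.single_le_sum (f := fun j => c j * c j)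
              (fun j _ => mul_self_nonneg _) (Finset.mem_univ i)
      · push_neg at hone
        obtain ⟨j, hji, hj⟩ := hone
        have h1 : ∀ m : ℤ, m ≠ 0 → 1 ≤ m * m := by
          intro m hm
          calc (1:ℤ) ≤ |m| := Int.one_le_abs hm
            _ ≤ |m| * |m| := le_mul_of_one_le_right (abs_nonneg _) (Int.one_le_abs hm)
            _ = m * m := by rw [← abs_mul, abs_mul_self]
        calc (2:ℤ) = 1 + 1 := by ring
          _ ≤ c i * c i + c j * c j := add_le_add (h1 _ hi) (h1 _ hj)
          _ ≤ ∑ m, c m * c m := by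
              rw [show c i * c i + c j * c j = ∑ m ∈ ({i, j} : Finset (Fin n)), c m * c m from
                (Finset.sum_pair (f := fun m => c m * c m) (Ne.symm hji)).symm]
              exact Finset.sum_le_sum_of_subset_of_nonneg (Finset.subset_univ _)
                (fun m _ _ => mul_self_nonneg _)
    exact_mod_cast this
  have hmem : (2:ℝ) ∈ {r : ℝ | ∃ x ∈ Dlattice n, x ≠ 0 ∧ ⟪x, x⟫ = r} := by
    set g : Fin n → ℤ := fun j => if j.val = 0 ∨ j.val = 1 then 1 else 0 with hg
    have h00 : ∀ i : Fin n, i.val ≠ 0 → i.val ≠ 1 → g i = 0 := by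
      intro i h1 h2; rw [hg]; simp only []; rw [if_neg (by omega)]
    have hv0 : g ⟨0, by omega⟩ = 1 := by rw [hg]; norm_num
    have hv1 : g ⟨1, by omega⟩ = 1 := by rw [hg]; norm_num
    refine ⟨WithLp.toLp 2 (fun j => (g j : ℝ)), ?_, ?_, ?_⟩
    · exact mem_D_of_supp_two g 0 1 (by omega) (by omega) (by omega) h00
        (by rw [hv0, hv1]; norm_num)
    · intro h
      have := congrFun (congrArg WithLp.ofLp h) ⟨0, by omega⟩
      rw [show (WithLp.toLp 2 fun j => (g j : ℝ)).ofLp ⟨0, by omega⟩ = (g ⟨0, by omega⟩ : ℝ) from rfl, hv0] at this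
      norm_num at this
    · exact normsq_supp_two g 0 1 (by omega) (by omega) (by omega) h00 hv0 (Or.inl hv1)
  exact le_antisymm (csInf_le ⟨2, hlb⟩ hmem) (le_csInf ⟨2, hmem⟩ hlb)

/-! ### The Minkowskian generators of the index-`2ᵏ` sublattice -/

/-- integer entries of the generators -/
def eInt (n k a j : ℕ) : ℤ :=
  if a < 2*k then
    if a % 2 = 0 then (if j = a ∨ j = a+1 then 1 else 0)
    else (if j = a-1 then 1 else if j = a then -1 else 0)
  else if a = n-1 then (if j = n-2 ∨ j = n-1 then 1 else 0)
  else if j = a then 1 else if j = a+1 then -1 else 0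

/-- the generators, as vectors in `ℝⁿ` -/
def eVec (n k : ℕ) (i : Fin n) : EuclideanSpace ℝ (Fin n) :=
  WithLp.toLp 2 (fun j : Fin n => (eInt n k i.val j.val : ℝ))

lemma eInt_support {n k : ℕ} (h2k : 2*k+2 ≤ n) (a : ℕ) (ha : a < n) :
    ∃ p q : ℕ, p < n ∧ q < n ∧ p ≠ q ∧ eInt n k a p = 1 ∧
      (eInt n k a q = 1 ∨ eInt n k a q = -1) ∧
      ∀ j, j ≠ p → j ≠ q → eInt n k a j = 0 := by
  obtain ⟨m, rfl⟩ : ∃ m, n = m + 2 := ⟨n - 2, by omega⟩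
  rcases lt_or_ge a (2*k) with h | h
  · rcases Nat.mod_two_eq_zero_or_one a with he | ho
    · refine ⟨a, a+1, by omega, by omega, by omega, ?_, Or.inl ?_, fun j h1 h2 => ?_⟩ <;>
        (unfold eInt; split_ifs <;> omega)
    · refine ⟨a-1, a, by omega, by omega, by omega, ?_, Or.inr ?_, fun j h1 h2 => ?_⟩ <;>
        (unfold eInt; split_ifs <;> first | rfl | omega)
  · rcases eq_or_lt_of_le (show a ≤ m+1 by omega) with he | hlt
    · refine ⟨m, m+1, by omega, by omega, by omega, ?_, Or.inl ?_, fun j h1 h2 => ?_⟩ <;>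
        (unfold eInt; split_ifs <;> omega)
    · refine ⟨a, a+1, by omega, by omega, by omega, ?_, Or.inr ?_, fun j h1 h2 => ?_⟩ <;>
        (unfold eInt; split_ifs <;> first | rfl | omega)

/-- each generator is a minimal vector of `Dₙ` -/
lemma eVec_minimal {n k : ℕ} (h2k : 2*k+2 ≤ n) (i : Fin n) :
    eVec n k i ∈ minimalVectors (Dlattice n) := by
  obtain ⟨p, q, hp, hq, hpq, hvp, hvq, h0⟩ := eInt_support h2k i.val i.isLt
  have h0' : ∀ j : Fin n, j.val ≠ p → j.val ≠ q → (fun j : Fin n => eInt n k i.val j.val) j = 0 :=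
    fun j h1 h2 => h0 j.val h1 h2
  refine ⟨?_, ?_, ?_⟩
  · exact mem_D_of_supp_two (fun j => eInt n k i.val j.val) p q hp hq hpq h0'
      (by rw [show eInt n k i.val (⟨p, hp⟩ : Fin n).val = 1 from hvp]
          rcases hvq with h | h <;>
            rw [show eInt n k i.val (⟨q, hq⟩ : Fin n).val = _ from h] <;> norm_num)
  · intro hcontra
    have := congrFun (congrArg WithLp.ofLp hcontra) ⟨p, hp⟩
    rw [show eVec n k i ⟨p, hp⟩ = ((eInt n k i.val p : ℤ) : ℝ) from rfl, hvp] at this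
    norm_num at this
  · rw [latticeMin_D (by omega)]
    exact normsq_supp_two (fun j => eInt n k i.val j.val) p q hp hq hpq h0' hvp hvq

/-! ### The representation lemma -/

def tdef (n k : ℕ) (c : ℕ → ℤ) (a : ℕ) : ℤ :=
  if a < 2*k then
    (if a % 2 = 0 then (c a + c (a+1))/2 else (c (a-1) - c a)/2)
  else if a = n-1 then (∑ m ∈ Finset.Ico (2*k) n, c m)/2
  else if a = n-2 then (∑ m ∈ Finset.Ico (2*k) n, c m)/2 - c (n-1)
  else ∑ m ∈ Finset.Ico (2*k) (a+1), c m

def cext {n : ℕ} (c : Fin n → ℤ) : ℕ → ℤ := fun m => if h : m < n then c ⟨m, h⟩ else 0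

lemma blocksum_even (c : ℕ → ℤ) (K : ℕ) (h : ∀ i, i < K → 2 ∣ (c (2*i) + c (2*i+1))) :
    2 ∣ ∑ m ∈ Finset.range (2*K), c m := by
  induction K with
  | zero => simp
  | succ K ih =>
      have h2 : 2*(K+1) = (2*K+1)+1 := by ring
      rw [h2, Finset.sum_range_succ, Finset.sum_range_succ]
      have := ih (fun i hi => h i (by omega))
      have := h K (by omega)
      omega

set_option maxHeartbeats 1000000 in
/-- The key representation lemma, coordinatewise. -/
lemma repr_coord {n k : ℕ} (h2k : 2*k+2 ≤ n) (c : Fin n → ℤ)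
    (hblocks : ∀ i, i < k → 2 ∣ (cext c (2*i) + cext c (2*i+1)))
    (htot : 2 ∣ ∑ j, c j) (j : Fin n) :
    ∑ i : Fin n, tdef n k (cext c) i.val * eInt n k i.val j.val = c j := by
  obtain ⟨m, rfl⟩ : ∃ m, n = m + 2 := ⟨n - 2, by omega⟩
  obtain ⟨c', hc'⟩ : ∃ c', c' = @cext (m+2) c := ⟨_, rfl⟩
  rw [← hc']
  rw [← hc'] at hblocks
  have hcv : ∀ (b : ℕ) (hb : b < m+2), c' b = c ⟨b, hb⟩ := fun b hb => by
    rw [hc']; exact dif_pos hb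
  have htot' : 2 ∣ ∑ i ∈ Finset.range (m+2), c' i := by
    have h : ∑ i ∈ Finset.range (m+2), c' i = ∑ i : Fin (m+2), c i := by
      rw [← Fin.sum_univ_eq_sum_range c']
      exact Finset.sum_congr rfl (fun i _ => hcv i.val i.isLt)
    rw [h]; exact htot
  have hpre : 2 ∣ ∑ i ∈ Finset.range (2*k), c' i := blocksum_even c' k hblocks
  obtain ⟨S, hSdef⟩ : ∃ S, S = ∑ i ∈ Finset.Ico (2*k) (m+2), c' i := ⟨_, rfl⟩
  have hS : 2 ∣ S := by
    rw [hSdef, Finset.sum_Ico_eq_sub c' (by omega)]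
    omega
  obtain ⟨b, hbn⟩ := j
  rw [← hcv b hbn]
  have td_even : ∀ a, a < 2*k → a % 2 = 0 → tdef (m+2) k c' a = (c' a + c' (a+1))/2 := by
    intro a h1 h2; unfold tdef; rw [if_pos h1, if_pos h2]
  have td_odd : ∀ a, a < 2*k → a % 2 = 1 → tdef (m+2) k c' a = (c' (a-1) - c' a)/2 := by
    intro a h1 h2; unfold tdef; rw [if_pos h1, if_neg (by omega)]
  have td_last : tdef (m+2) k c' (m+1) = S/2 := by
    unfold tdef; rw [if_neg (by omega), if_pos (by omega), ← hSdef]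
  have td_pen : tdef (m+2) k c' m = S/2 - c' (m+1) := by
    unfold tdef; rw [if_neg (by omega), if_neg (by omega), if_pos (by omega), ← hSdef]
    norm_num
  have td_tail : ∀ a, 2*k ≤ a → a + 1 ≤ m →
      tdef (m+2) k c' a = ∑ i ∈ Finset.Ico (2*k) (a+1), c' i := by
    intro a h1 h2; unfold tdef; rw [if_neg (by omega), if_neg (by omega), if_neg (by omega)]
  rcases lt_or_ge b (2*k) with hblk | hblk
  · rcases Nat.mod_two_eq_zero_or_one b with hpar | hpar
    · -- b even, in a block
      rw [sum_supp_two (fun i : Fin (m+2) => tdef (m+2) k c' i.val * eInt (m+2) k i.val b)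
        b (b+1) (by omega) (by omega) (by omega)
        (fun i h1 h2 => by
          rw [show eInt (m+2) k i.val b = 0 from by unfold eInt; split_ifs <;> omega, mul_zero])]
      have e1 : eInt (m+2) k b b = 1 := by unfold eInt; split_ifs <;> omega
      have e2 : eInt (m+2) k (b+1) b = 1 := by unfold eInt; split_ifs <;> omega
      simp only [e1, e2, td_even b hblk hpar, td_odd (b+1) (by omega) (by omega),
        show b + 1 - 1 = b from by omega]
      have hdvd := hblocks (b/2) (by omega)
      rw [show 2*(b/2) = b from by omega] at hdvd
      omega
    · -- b odd, in a block
      rw [sum_supp_two (fun i : Fin (m+2) => tdef (m+2) k c' i.val * eInt (m+2) k i.val b)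
        (b-1) b (by omega) (by omega) (by omega)
        (fun i h1 h2 => by
          rw [show eInt (m+2) k i.val b = 0 from by unfold eInt; split_ifs <;> omega, mul_zero])]
      have e1 : eInt (m+2) k (b-1) b = 1 := by unfold eInt; split_ifs <;> omega
      have e2 : eInt (m+2) k b b = -1 := by unfold eInt; split_ifs <;> omega
      simp only [e1, e2, td_even (b-1) (by omega) (by omega), td_odd b hblk hpar,
        show b - 1 + 1 = b from by omega]
      have hdvd := hblocks (b/2) (by omega)
      rw [show 2*(b/2) = b-1 from by omega] at hdvd
      rw [show b-1+1 = b from by omega] at hdvd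
      omega
  · rcases eq_or_lt_of_le (show b ≤ m+1 by omega) with hlast | hlt
    · -- b = m+1
      rw [sum_supp_two (fun i : Fin (m+2) => tdef (m+2) k c' i.val * eInt (m+2) k i.val b)
        m (m+1) (by omega) (by omega) (by omega)
        (fun i h1 h2 => by
          rw [show eInt (m+2) k i.val b = 0 from by unfold eInt; split_ifs <;> omega, mul_zero])]
      have e1 : eInt (m+2) k m b = -1 := by unfold eInt; split_ifs <;> omega
      have e2 : eInt (m+2) k (m+1) b = 1 := by unfold eInt; split_ifs <;> omega
      simp only [e1, e2, td_last, td_pen]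
      rw [hlast]; ring
    · rcases eq_or_lt_of_le (show b ≤ m by omega) with hpen | hmid
      · -- b = m
        rcases eq_or_lt_of_le (show 2*k ≤ m by omega) with h2km | h2km
        · -- m = 2k
          rw [sum_supp_two (fun i : Fin (m+2) => tdef (m+2) k c' i.val * eInt (m+2) k i.val b)
            m (m+1) (by omega) (by omega) (by omega)
            (fun i h1 h2 => by
              rw [show eInt (m+2) k i.val b = 0 from by unfold eInt; split_ifs <;> omega,
                mul_zero])]
          have e1 : eInt (m+2) k m b = 1 := by unfold eInt; split_ifs <;> omega
          have e2 : eInt (m+2) k (m+1) b = 1 := by unfold eInt; split_ifs <;> omega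
          simp only [e1, e2, td_last, td_pen]
          have hSval : S = c' m + c' (m+1) := by
            rw [hSdef, show m + 2 = (m+1)+1 from rfl,
              Finset.sum_Ico_succ_top (by omega), Finset.sum_Ico_succ_top (by omega),
              ← h2km, Finset.Ico_self, Finset.sum_empty]
            ring
          rw [hpen]
          omega
        · -- 2k < m
          rw [sum_supp_three (fun i : Fin (m+2) => tdef (m+2) k c' i.val * eInt (m+2) k i.val b)
            (m-1) m (m+1) (by omega) (by omega) (by omega) (by omega) (by omega) (by omega)
            (fun i h1 h2 h3 => by
              rw [show eInt (m+2) k i.val b = 0 from by unfold eInt; split_ifs <;> omega,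
                mul_zero])]
          have e1 : eInt (m+2) k (m-1) b = -1 := by unfold eInt; split_ifs <;> omega
          have e2 : eInt (m+2) k m b = 1 := by unfold eInt; split_ifs <;> omega
          have e3 : eInt (m+2) k (m+1) b = 1 := by unfold eInt; split_ifs <;> omega
          simp only [e1, e2, e3, td_last, td_pen, td_tail (m-1) (by omega) (by omega),
            show m - 1 + 1 = m from by omega]
          have hSval : S = (∑ i ∈ Finset.Ico (2*k) m, c' i) + c' m + c' (m+1) := by
            rw [hSdef, show m + 2 = (m+1)+1 from rfl,
              Finset.sum_Ico_succ_top (by omega), Finset.sum_Ico_succ_top (by omega)]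
          obtain ⟨T, hT⟩ : ∃ T, T = ∑ i ∈ Finset.Ico (2*k) m, c' i := ⟨_, rfl⟩
          rw [← hT] at hSval
          rw [← hT, hpen]
          omega
      · rcases eq_or_lt_of_le hblk with hbk | hbk
        · -- b = 2k, first tail coordinate
          rw [sum_supp_one (fun i : Fin (m+2) => tdef (m+2) k c' i.val * eInt (m+2) k i.val b)
            b (by omega)
            (fun i h1 => by
              rw [show eInt (m+2) k i.val b = 0 from by unfold eInt; split_ifs <;> omega,
                mul_zero])]
          have e1 : eInt (m+2) k b b = 1 := by unfold eInt; split_ifs <;> omega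
          simp only [e1, td_tail b (by omega) (by omega)]
          rw [← hbk, Finset.sum_Ico_succ_top (by omega), Finset.Ico_self, Finset.sum_empty]
          ring
        · -- 2k < b ≤ m-1, middle tail coordinate
          rw [sum_supp_two (fun i : Fin (m+2) => tdef (m+2) k c' i.val * eInt (m+2) k i.val b)
            (b-1) b (by omega) (by omega) (by omega)
            (fun i h1 h2 => by
              rw [show eInt (m+2) k i.val b = 0 from by unfold eInt; split_ifs <;> omega,
                mul_zero])]
          have e1 : eInt (m+2) k (b-1) b = -1 := by unfold eInt; split_ifs <;> omega
          have e2 : eInt (m+2) k b b = 1 := by unfold eInt; split_ifs <;> omega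
          simp only [e1, e2, td_tail (b-1) (by omega) (by omega),
            td_tail b (by omega) (by omega), show b - 1 + 1 = b from by omega]
          rw [Finset.sum_Ico_succ_top (by omega : 2*k ≤ b)]
          ring

lemma repr_mem {n k : ℕ} (h2k : 2*k+2 ≤ n) (c : Fin n → ℤ)
    (hblocks : ∀ i, i < k → 2 ∣ (cext c (2*i) + cext c (2*i+1)))
    (htot : 2 ∣ ∑ j, c j) :
    (WithLp.toLp 2 (fun j => (c j : ℝ)) : EuclideanSpace ℝ (Fin n)) ∈
      Submodule.span ℤ (Set.range (eVec n k)) := by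
  have hx : (WithLp.toLp 2 (fun j => (c j : ℝ)) : EuclideanSpace ℝ (Fin n)) =
      ∑ i : Fin n, tdef n k (cext c) i.val • eVec n k i := by
    ext j
    have h1 : (∑ i : Fin n, tdef n k (cext c) i.val • eVec n k i) j
        = ∑ i : Fin n, ((tdef n k (cext c) i.val * eInt n k i.val j.val : ℤ) : ℝ) := by
      rw [WithLp.ofLp_sum, Finset.sum_apply]
      refine Finset.sum_congr rfl (fun i _ => ?_)
      rw [PiLp.smul_apply, zsmul_eq_mul]
      push_cast
      rfl
    rw [h1, ← Int.cast_sum, repr_coord h2k c hblocks htot j]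
  rw [hx]
  exact Submodule.sum_mem _ (fun i _ =>
    Submodule.smul_mem _ _ (Submodule.subset_span ⟨i, rfl⟩))

/-! ### Linear independence of the generators -/

lemma eVec_linearIndependent {n k : ℕ} (h2k : 2*k+2 ≤ n) :
    LinearIndependent ℝ (eVec n k) := by
  apply linearIndependent_of_top_le_span_of_card_eq_finrank
  · -- spanning
    rw [← (EuclideanSpace.basisFun (Fin n) ℝ).toBasis.span_eq]
    apply Submodule.span_le.mpr
    rintro x ⟨j, rfl⟩
    -- the basis vector is `single j 1`
    have hb : (EuclideanSpace.basisFun (Fin n) ℝ).toBasis j =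
        (WithLp.toLp 2 (fun j' => (if j' = j then (1:ℝ) else 0)) : EuclideanSpace ℝ (Fin n)) := by
      have : (EuclideanSpace.basisFun (Fin n) ℝ).toBasis j = EuclideanSpace.single j 1 := by
        simp [EuclideanSpace.basisFun]; rfl
      rw [this]
      ext j'
      rw [EuclideanSpace.single_apply]
    rw [hb]
    -- 2 • single j 1 is in the ℤ-span
    obtain ⟨c, hc⟩ : ∃ c : Fin n → ℤ, c = fun j' => if j' = j then 2 else 0 := ⟨_, rfl⟩
    have hcval : ∀ j', c j' = if j' = j then 2 else 0 := fun j' => by rw [hc]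
    have hcd : ∀ j', 2 ∣ c j' := by intro j'; rw [hcval j']; split <;> norm_num
    have hmem : (WithLp.toLp 2 (fun j' => (c j' : ℝ)) : EuclideanSpace ℝ (Fin n)) ∈
        Submodule.span ℤ (Set.range (eVec n k)) := by
      apply repr_mem h2k c
      · intro i hik
        have h1 : ∀ m : ℕ, 2 ∣ cext c m := by
          intro m; unfold cext; split
          · exact hcd _
          · norm_num
        exact dvd_add (h1 _) (h1 _)
      · exact Finset.dvd_sum (fun j' _ => hcd j')
    have hmemR : (WithLp.toLp 2 (fun j' => (c j' : ℝ)) : EuclideanSpace ℝ (Fin n)) ∈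
        Submodule.span ℝ (Set.range (eVec n k)) :=
      Submodule.span_subset_span ℤ ℝ _ hmem
    have heq : (WithLp.toLp 2 (fun j' => (if j' = j then (1:ℝ) else 0)) : EuclideanSpace ℝ (Fin n)) =
        (2⁻¹ : ℝ) • (WithLp.toLp 2 (fun j' => (c j' : ℝ)) : EuclideanSpace ℝ (Fin n)) := by
      ext j'
      show (if j' = j then (1:ℝ) else 0) = 2⁻¹ * (c j' : ℝ)
      rw [hcval j']
      split <;> norm_num
    rw [heq]
    exact Submodule.smul_mem _ _ hmemR
  · simp [finrank_euclideanSpace_fin]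

/-! ### The quotient map to `(ℤ/2)ᵏ` -/

lemma round_coord {n : ℕ} {x : EuclideanSpace ℝ (Fin n)} {c : Fin n → ℤ}
    (h : ∀ j, x j = (c j : ℝ)) (j : Fin n) : round (x j) = c j := by
  rw [h j, round_intCast]

def phi (n k : ℕ) (h2k : 2*k+2 ≤ n) : Dlattice n →ₗ[ℤ] (Fin k → ZMod 2) where
  toFun x := fun i => ((round ((x : EuclideanSpace ℝ (Fin n)) ⟨2*i.val, by omega⟩) +
      round ((x : EuclideanSpace ℝ (Fin n)) ⟨2*i.val+1, by omega⟩) : ℤ) : ZMod 2)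
  map_add' := by
    intro x y
    obtain ⟨cx, -, hx⟩ := x.2
    obtain ⟨cy, -, hy⟩ := y.2
    funext i
    have hxy : ∀ j : Fin n, ((x + y : Dlattice n) : EuclideanSpace ℝ (Fin n)) j
        = ((cx j + cy j : ℤ) : ℝ) := by
      intro j
      rw [Submodule.coe_add, PiLp.add_apply, hx j, hy j]; push_cast; ring
    simp only [Pi.add_apply]
    rw [round_coord hxy, round_coord hxy, round_coord hx, round_coord hx,
      round_coord hy, round_coord hy]
    push_cast
    ring
  map_smul' := by
    intro z x
    obtain ⟨cx, -, hx⟩ := x.2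
    funext i
    have hzx : ∀ j : Fin n, ((z • x : Dlattice n) : EuclideanSpace ℝ (Fin n)) j
        = ((z * cx j : ℤ) : ℝ) := by
      intro j
      rw [Submodule.coe_smul, PiLp.smul_apply, hx j, zsmul_eq_mul]; push_cast; ring
    simp only [RingHom.id_apply, Pi.smul_apply]
    rw [round_coord hzx, round_coord hzx, round_coord hx, round_coord hx, zsmul_eq_mul]
    push_cast
    ring

lemma eInt_block_parity {n k : ℕ} (h2k : 2*k+2 ≤ n) (a : ℕ) (i : ℕ) (hik : i < k) :
    2 ∣ eInt n k a (2*i) + eInt n k a (2*i+1) := by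
  unfold eInt; split_ifs <;> omega

lemma ker_phi {n k : ℕ} (h2k : 2*k+2 ≤ n) :
    LinearMap.ker (phi n k h2k) =
      Submodule.comap (Dlattice n).subtype (Submodule.span ℤ (Set.range (eVec n k))) := by
  ext y
  simp only [LinearMap.mem_ker, Submodule.mem_comap, Submodule.subtype_apply]
  constructor
  · intro h0
    obtain ⟨c, hc, hyc⟩ := y.2
    have hy : (y : EuclideanSpace ℝ (Fin n)) = WithLp.toLp 2 (fun j => (c j : ℝ)) := PiLp.ext hyc
    rw [hy]
    apply repr_mem h2k c ?_ hc
    intro i hik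
    have hzero := congrFun h0 ⟨i, hik⟩
    have hphi : phi n k h2k y ⟨i, hik⟩ =
        ((c ⟨2*i, by omega⟩ + c ⟨2*i+1, by omega⟩ : ℤ) : ZMod 2) := by
      show ((round ((y : EuclideanSpace ℝ (Fin n)) ⟨2*i, by omega⟩) +
        round ((y : EuclideanSpace ℝ (Fin n)) ⟨2*i+1, by omega⟩) : ℤ) : ZMod 2) = _
      rw [round_coord hyc, round_coord hyc]
    rw [hphi, Pi.zero_apply] at hzero
    have hdvd := (ZMod.intCast_zmod_eq_zero_iff_dvd _ 2).mp hzero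
    have hc1 : cext c (2*i) = c ⟨2*i, by omega⟩ := dif_pos (by omega)
    have hc2 : cext c (2*i+1) = c ⟨2*i+1, by omega⟩ := dif_pos (by omega)
    rw [hc1, hc2]
    exact_mod_cast hdvd
  · intro hspan
    have key : ∀ x ∈ Submodule.span ℤ (Set.range (eVec n k)),
        ∃ c : Fin n → ℤ, (∀ j, x j = (c j : ℝ)) ∧
          ∀ (i : ℕ) (hik : i < k), 2 ∣ (c ⟨2*i, by omega⟩ + c ⟨2*i+1, by omega⟩) := by
      intro x hx
      induction hx using Submodule.span_induction with
      | mem v hv =>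
          obtain ⟨a, rfl⟩ := hv
          exact ⟨fun j => eInt n k a.val j.val, fun j => rfl,
            fun i hik => eInt_block_parity h2k a.val i hik⟩
      | zero => exact ⟨0, fun j => by simp, fun i hik => by simp⟩
      | add u v hu hv ihu ihv =>
          obtain ⟨cu, hcu, hbu⟩ := ihu
          obtain ⟨cv, hcv, hbv⟩ := ihv
          refine ⟨cu + cv, fun j => by
              rw [PiLp.add_apply, hcu j, hcv j, Pi.add_apply]; push_cast; ring,
            fun i hik => ?_⟩
          simp only [Pi.add_apply]
          have := dvd_add (hbu i hik) (hbv i hik)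
          omega
      | smul z v hv ihv =>
          obtain ⟨cv, hcv, hbv⟩ := ihv
          refine ⟨z • cv, fun j => by
              rw [PiLp.smul_apply, hcv j, zsmul_eq_mul]; push_cast; simp [zsmul_eq_mul],
            fun i hik => ?_⟩
          simp only [Pi.smul_apply, smul_eq_mul]
          have := Dvd.dvd.mul_left (hbv i hik) z
          rw [mul_add] at this
          exact this
    obtain ⟨c, hcoord, hblk⟩ := key _ hspan
    funext i
    show ((round ((y : EuclideanSpace ℝ (Fin n)) ⟨2*i.val, by omega⟩) +
      round ((y : EuclideanSpace ℝ (Fin n)) ⟨2*i.val+1, by omega⟩) : ℤ) : ZMod 2) = 0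
    rw [round_coord hcoord, round_coord hcoord]
    rw [ZMod.intCast_zmod_eq_zero_iff_dvd]
    exact_mod_cast hblk i.val i.isLt

lemma phi_surj {n k : ℕ} (h2k : 2*k+2 ≤ n) : Function.Surjective (phi n k h2k) := by
  intro v
  set g : Fin k → Fin n → ℤ :=
    fun i j => if j.val = 2*i.val ∨ j.val = n-1 then 1 else 0 with hg
  have hgz : ∀ (i : Fin k) (j : Fin n), j.val ≠ 2*i.val → j.val ≠ n-1 → g i j = 0 := by
    intro i j h1 h2; rw [hg]; simp only []; rw [if_neg (by omega)]
  have hgp : ∀ (i : Fin k), g i ⟨2*i.val, by omega⟩ = 1 := by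
    intro i; rw [hg]; simp
  have hgq : ∀ (i : Fin k), g i ⟨n-1, by omega⟩ = 1 := by
    intro i; rw [hg]; simp
  have hw : ∀ i : Fin k, (WithLp.toLp 2 (fun j => (g i j : ℝ)) : EuclideanSpace ℝ (Fin n)) ∈ Dlattice n := by
    intro i
    exact mem_D_of_supp_two (g i) (2*i.val) (n-1) (by omega) (by omega) (by omega)
      (fun j h1 h2 => hgz i j h1 h2)
      (by rw [hgp i, hgq i]; norm_num)
  set w : Fin k → Dlattice n := fun i => ⟨_, hw i⟩ with hwdef
  refine ⟨∑ i, ((v i).val : ℤ) • w i, ?_⟩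
  rw [map_sum]
  funext i'
  have hphiw : ∀ i : Fin k, phi n k h2k (w i) = fun i' : Fin k =>
      ((if i' = i then (1:ℤ) else 0 : ℤ) : ZMod 2) := by
    intro i
    funext i''
    show ((round ((w i : EuclideanSpace ℝ (Fin n)) ⟨2*i''.val, by omega⟩) +
      round ((w i : EuclideanSpace ℝ (Fin n)) ⟨2*i''.val+1, by omega⟩) : ℤ) : ZMod 2) = _
    have hcoord : ∀ j : Fin n, (w i : EuclideanSpace ℝ (Fin n)) j = ((g i j : ℤ) : ℝ) :=
      fun j => rfl
    rw [round_coord hcoord, round_coord hcoord]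
    have h1 : g i ⟨2*i''.val, by omega⟩ = if i'' = i then 1 else 0 := by
      rw [hg]; simp only [Fin.val_mk]
      by_cases h : i'' = i
      · subst h
        rw [if_pos (Or.inl rfl), if_pos rfl]
      · have hne : i''.val ≠ i.val := fun hc => h (Fin.ext hc)
        have hlt := i''.isLt
        rw [if_neg (by omega), if_neg h]
    have h2 : g i ⟨2*i''.val+1, by omega⟩ = 0 := by
      have hlt := i''.isLt
      rw [hg]; simp only [Fin.val_mk]; rw [if_neg (by omega)]
    rw [h1, h2]
    split <;> norm_num
  rw [Finset.sum_apply]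
  have heach : ∀ i : Fin k, (phi n k h2k (((v i).val : ℤ) • w i)) i'
      = if i' = i then v i else 0 := by
    intro i
    rw [map_zsmul, Pi.smul_apply, hphiw i]
    simp only []
    split
    · rw [zsmul_eq_mul]
      push_cast
      simp [ZMod.natCast_val, ZMod.cast_id]
    · simp
  rw [Finset.sum_congr rfl (fun i _ => heach i)]
  simp

/-! ### The index computation -/

lemma index_eVec {n k : ℕ} (h2k : 2*k+2 ≤ n) :
    subIndex (Dlattice n) (Submodule.span ℤ (Set.range (eVec n k))) = 2^k := by
  unfold subIndex quotLat
  have e1 : (Dlattice n ⧸ Submodule.comap (Dlattice n).subtype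
      (Submodule.span ℤ (Set.range (eVec n k)))) ≃ₗ[ℤ] (Fin k → ZMod 2) :=
    (Submodule.quotEquivOfEq _ _ (ker_phi h2k).symm).trans
      ((phi n k h2k).quotKerEquivOfSurjective (phi_surj h2k))
  rw [Nat.card_congr e1.toEquiv]
  simp [Nat.card_eq_fintype_card]

end DnAux

/-- For every `n ≥ 2` and every integer `k` with `0 ≤ k ≤ ⌊(n − 2)/2⌋`, the
root lattice `Dₙ` possesses a Minkowskian sublattice `Λ'` with
`[Dₙ : Λ'] = 2ᵏ`; hence every order in `{1, 2, 2², …, 2^⌊(n−2)/2⌋}` is realized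
by some quotient `Dₙ/Λ'`. -/
theorem Dn_realizes_all_two_power_indices {n : ℕ} (hn : 2 ≤ n)
    (k : ℕ) (hk : k ≤ (n - 2) / 2) :
    ∃ Λ' : Submodule ℤ (EuclideanSpace ℝ (Fin n)),
      IsMinkowskian (Dlattice n) Λ' ∧ subIndex (Dlattice n) Λ' = 2 ^ k := by
  have h2k : 2*k+2 ≤ n := by omega
  refine ⟨Submodule.span ℤ (Set.range (DnAux.eVec n k)),
    ⟨DnAux.eVec n k, DnAux.eVec_linearIndependent h2k,
      fun i => DnAux.eVec_minimal h2k i, rfl⟩,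
    DnAux.index_eVec h2k⟩
end
end

section
/- Let C ⊆ 𝔽₂ⁿ be a binary linear code all of whose nonzero words have Hamming weight ≥ 4, and let t be the number of 2-element subsets {i, j} of {1, …, n} such that i and j do not both belong to the support of any weight-4 codeword of C. Then the perfection rank of Λ_C equals n(n+1)/2 − t; that is, the dimension of the real span of the set of symmetric rank-one matrices {v·vᵀ : v ∈ S(Λ_C)} is n(n+1)/2 − t. -/
open scoped BigOperators RealInnerProductSpace

noncomputable section

/-- The coordinatewise 0–1 lift of a binary codeword to `ℝⁿ`. -/
def codeLift {n : ℕ} (w : Fin n → ZMod 2) : EuclideanSpace ℝ (Fin n) :=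
  WithLp.toLp 2 (fun i => ((w i).val : ℝ))

/-- The lattice `Λ_C` associated with a binary linear code `C ⊆ 𝔽₂ⁿ`: it is
generated by `ℤⁿ` together with the vectors `x_w/2` for `w ∈ C`. -/
def codeLattice {n : ℕ} (C : Submodule (ZMod 2) (Fin n → ZMod 2)) :
    Submodule ℤ (EuclideanSpace ℝ (Fin n)) :=
  Submodule.span ℤ
    ((Set.range fun i : Fin n => EuclideanSpace.single i (1 : ℝ)) ∪
      ((fun w => (2 : ℝ)⁻¹ • codeLift w) '' (C : Set (Fin n → ZMod 2))))

namespace Aux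
variable {n : ℕ} (C : Submodule (ZMod 2) (Fin n → ZMod 2))
def halfVec (a : Fin n → ℤ) : EuclideanSpace ℝ (Fin n) := WithLp.toLp 2 (fun i => (a i : ℝ) / 2)
def redVec (a : Fin n → ℤ) : Fin n → ZMod 2 := fun i => (a i : ZMod 2)

def auxLat : Submodule ℤ (EuclideanSpace ℝ (Fin n)) where
  carrier := {x | ∃ a : Fin n → ℤ, x = halfVec a ∧ redVec a ∈ C}
  zero_mem' := ⟨0, by ext i; simp [halfVec], by
    have : redVec (0 : Fin n → ℤ) = 0 := by funext i; simp [redVec]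
    rw [this]; exact C.zero_mem⟩
  add_mem' := by
    rintro x y ⟨a, rfl, ha⟩ ⟨b, rfl, hb⟩
    refine ⟨a + b, ?_, ?_⟩
    · ext i
      show (halfVec a + halfVec b) i = _
      simp [halfVec]
      all_goals (push_cast; ring)
    · have : redVec (a + b) = redVec a + redVec b := by
        funext i; simp [redVec]
        all_goals (push_cast; ring)
      rw [this]; exact C.add_mem ha hb
  smul_mem' := by
    rintro c x ⟨a, rfl, ha⟩
    refine ⟨c • a, ?_, ?_⟩
    · ext i
      show (c • halfVec a) i = _
      simp [halfVec]
      all_goals (push_cast; ring)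
    · have : redVec (c • a) = (c : ZMod 2) • redVec a := by
        funext i; simp [redVec, smul_eq_mul]
        all_goals (push_cast; ring)
      rw [this]; exact C.smul_mem _ ha

lemma mem_codeLattice_iff {x : EuclideanSpace ℝ (Fin n)} :
    x ∈ codeLattice C ↔ ∃ a : Fin n → ℤ, x = halfVec a ∧ redVec a ∈ C := by
  constructor
  · intro hx
    have hle : codeLattice C ≤ auxLat C := by
      rw [codeLattice, Submodule.span_le]
      rintro z (⟨i, rfl⟩ | ⟨w, hw, rfl⟩)
      · refine ⟨fun j => if j = i then 2 else 0, ?_, ?_⟩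
        · ext j
          simp [halfVec, EuclideanSpace.single_apply]
          split <;> norm_num
        · have : redVec (fun j => if j = i then (2:ℤ) else 0) = 0 := by
            funext j; by_cases h : j = i <;> simp [redVec, h] <;> decide
          rw [this]; exact C.zero_mem
      · refine ⟨fun i => ((w i).val : ℤ), ?_, ?_⟩
        · ext i
          show (2:ℝ)⁻¹ • codeLift w i = _
          simp [halfVec, codeLift]; ring
        · have : redVec (fun i => ((w i).val : ℤ)) = w := by
            funext i; simp [redVec, ZMod.natCast_val, ZMod.cast_id]
          rw [this]; exact hw
    exact hle hx
  · rintro ⟨a, rfl, ha⟩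
    set w := redVec a with hw
    have hdvd : ∀ i, (2:ℤ) ∣ (a i - ((w i).val : ℤ)) := by
      intro i
      have : ((a i - ((w i).val:ℤ) : ℤ) : ZMod 2) = 0 := by
        push_cast
        simp [hw, redVec, ZMod.natCast_val, ZMod.cast_id]
      exact (ZMod.intCast_zmod_eq_zero_iff_dvd _ 2).mp this
    choose z hz using hdvd
    have key : halfVec a = ((2:ℝ)⁻¹ • codeLift w) + ∑ i, z i • EuclideanSpace.single i (1:ℝ) := by
      ext j
      have hsum : (∑ i, z i • EuclideanSpace.single i (1:ℝ)) j
          = ∑ i, (z i : ℝ) * (if j = i then 1 else 0) := by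
        rw [WithLp.ofLp_sum, Finset.sum_apply]
        refine Finset.sum_congr rfl fun i _ => ?_
        simp [EuclideanSpace.single_apply]
      show halfVec a j = ((2:ℝ)⁻¹ • codeLift w) j + (∑ i, z i • EuclideanSpace.single i (1:ℝ)) j
      rw [hsum]
      have h1 : ((2:ℝ)⁻¹ • codeLift w) j = ((w j).val : ℝ)/2 := by
        show (2:ℝ)⁻¹ * codeLift w j = _
        rw [codeLift, PiLp.toLp_apply]; ring
      rw [h1]
      simp only [mul_ite, mul_one, mul_zero, Finset.sum_ite_eq, Finset.mem_univ, if_true]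
      have h2 : (a j : ℝ) - ((w j).val : ℝ) = 2 * (z j : ℝ) := by
        exact_mod_cast congrArg (Int.cast : ℤ → ℝ) (hz j)
      rw [halfVec, PiLp.toLp_apply]
      linarith
    rw [key]
    refine Submodule.add_mem _ ?_ (Submodule.sum_mem _ fun i _ => ?_)
    · exact Submodule.subset_span (Or.inr ⟨w, ha, rfl⟩)
    · exact Submodule.smul_mem _ _ (Submodule.subset_span (Or.inl ⟨i, rfl⟩))

lemma inner_self_eq (x : EuclideanSpace ℝ (Fin n)) : ⟪x, x⟫ = ∑ i, x i * x i := by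
  simp only [PiLp.inner_apply, RCLike.inner_apply, conj_trivial]

lemma val_eq (x : ZMod 2) : x.val = if x ≠ 0 then 1 else 0 := by revert x; decide

lemma sum_val (w : Fin n → ZMod 2) : ∑ i, (w i).val = hammingNorm w := by
  rw [hammingNorm, Finset.card_filter]
  exact Finset.sum_congr rfl fun i _ => val_eq (w i)

lemma inner_halfVec (a : Fin n → ℤ) :
    ⟪halfVec a, halfVec a⟫ = ((∑ i, (a i)^2 : ℤ) : ℝ) / 4 := by
  rw [inner_self_eq]
  push_cast
  rw [Finset.sum_div]
  refine Finset.sum_congr rfl fun i _ => ?_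
  rw [halfVec, PiLp.toLp_apply]; ring

lemma sq_pos_of_ne {m : ℤ} (h : m ≠ 0) : 1 ≤ m ^ 2 := by
  rcases lt_or_gt_of_ne h with h | h <;> nlinarith

lemma odd_of_red_ne {a : Fin n → ℤ} {i : Fin n} (h : redVec a i ≠ 0) : a i ≠ 0 := by
  intro h0
  exact h (by simp [redVec, h0])

lemma four_le_sq_of_even {m : ℤ} (h2 : (2:ℤ) ∣ m) (h : m ≠ 0) : 4 ≤ m ^ 2 := by
  obtain ⟨k, rfl⟩ := h2
  have hk : k ≠ 0 := by rintro rfl; simp at h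
  have := sq_pos_of_ne hk
  nlinarith

lemma four_le_sum_sq (hC : ∀ w ∈ C, w ≠ 0 → 4 ≤ hammingNorm w)
    {a : Fin n → ℤ} (hred : redVec a ∈ C) (hne : ∃ i, a i ≠ 0) :
    4 ≤ ∑ i, (a i)^2 := by
  by_cases h0 : redVec a = 0
  · obtain ⟨i, hi⟩ := hne
    have heven : (2:ℤ) ∣ a i := by
      have : ((a i : ℤ) : ZMod 2) = 0 := by
        have := congrFun h0 i; simpa [redVec] using this
      exact (ZMod.intCast_zmod_eq_zero_iff_dvd _ 2).mp this
    calc (4:ℤ) ≤ (a i)^2 := four_le_sq_of_even heven hi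
    _ ≤ ∑ j, (a j)^2 :=
      Finset.single_le_sum (fun j _ => sq_nonneg (a j)) (Finset.mem_univ i)
  · have h4 : 4 ≤ hammingNorm (redVec a) := hC _ hred h0
    have hcard : (hammingNorm (redVec a) : ℤ) ≤
        ∑ i ∈ Finset.univ.filter (fun i => redVec a i ≠ 0), (a i)^2 := by
      rw [hammingNorm]
      calc ((Finset.univ.filter (fun i => redVec a i ≠ 0)).card : ℤ)
          = ∑ i ∈ Finset.univ.filter (fun i => redVec a i ≠ 0), 1 := by simp
        _ ≤ _ := Finset.sum_le_sum fun i hi => by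
            have := Finset.mem_filter.mp hi
            exact sq_pos_of_ne (odd_of_red_ne this.2)
    have hsub : ∑ i ∈ Finset.univ.filter (fun i => redVec a i ≠ 0), (a i)^2
        ≤ ∑ i, (a i)^2 :=
      Finset.sum_le_sum_of_subset_of_nonneg (Finset.filter_subset _ _)
        (fun i _ _ => sq_nonneg (a i))
    have : (4:ℤ) ≤ (hammingNorm (redVec a) : ℤ) := by exact_mod_cast h4
    omega

lemma latticeMin_eq_one (hC : ∀ w ∈ C, w ≠ 0 → 4 ≤ hammingNorm w) (hn : 0 < n) :
    latticeMin (codeLattice C) = 1 := by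
  rw [latticeMin]
  have hbound : ∀ r ∈ {r : ℝ | ∃ x ∈ codeLattice C, x ≠ 0 ∧ ⟪x, x⟫ = r}, (1:ℝ) ≤ r := by
    rintro r ⟨x, hx, hx0, rfl⟩
    obtain ⟨a, rfl, hared⟩ := (mem_codeLattice_iff C).mp hx
    have hne : ∃ i, a i ≠ 0 := by
      by_contra h
      push_neg at h
      exact hx0 (by ext i; simp [halfVec, h i])
    have h4 : (4:ℤ) ≤ ∑ i, (a i)^2 := four_le_sum_sq C hC hared hne
    rw [inner_halfVec]
    have : (4:ℝ) ≤ ((∑ i, (a i)^2 : ℤ) : ℝ) := by exact_mod_cast h4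
    linarith
  have hmem : (1:ℝ) ∈ {r : ℝ | ∃ x ∈ codeLattice C, x ≠ 0 ∧ ⟪x, x⟫ = r} := by
    refine ⟨EuclideanSpace.single ⟨0, hn⟩ (1:ℝ), ?_, ?_, ?_⟩
    · exact Submodule.subset_span (Or.inl ⟨⟨0, hn⟩, rfl⟩)
    · intro h
      have := congrArg (fun v : EuclideanSpace ℝ (Fin n) => v ⟨0, hn⟩) h
      simp [EuclideanSpace.single_apply] at this
    · rw [inner_self_eq]
      simp [EuclideanSpace.single_apply]
  exact le_antisymm (csInf_le ⟨1, hbound⟩ hmem) (le_csInf ⟨1, hmem⟩ hbound)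

lemma minimal_sum_sq (hC : ∀ w ∈ C, w ∈ C → True) : True := trivial

lemma pos_of_minimal {x : EuclideanSpace ℝ (Fin n)}
    (hx : x ∈ minimalVectors (codeLattice C)) : 0 < n := by
  rcases Nat.eq_zero_or_pos n with h | h
  · exfalso
    subst h
    exact hx.2.1 (Subsingleton.elim _ _)
  · exact h

lemma sum_sq_eq_four (hC : ∀ w ∈ C, w ≠ 0 → 4 ≤ hammingNorm w)
    {a : Fin n → ℤ} (ha : redVec a ∈ C)
    (hmin : halfVec a ∈ minimalVectors (codeLattice C)) :
    ∑ i, (a i)^2 = 4 := by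
  have hn : 0 < n := pos_of_minimal C hmin
  have h1 : ⟪halfVec a, halfVec a⟫ = 1 := by
    rw [hmin.2.2, latticeMin_eq_one C hC hn]
  rw [inner_halfVec] at h1
  have : ((∑ i, (a i)^2 : ℤ) : ℝ) = 4 := by linarith
  exact_mod_cast this

lemma pair_covered (hC : ∀ w ∈ C, w ≠ 0 → 4 ≤ hammingNorm w)
    {x : EuclideanSpace ℝ (Fin n)} (hx : x ∈ minimalVectors (codeLattice C))
    {i j : Fin n} (hij : i ≠ j) (hi : x i ≠ 0) (hj : x j ≠ 0) :
    ∃ w ∈ C, hammingNorm w = 4 ∧ w i ≠ 0 ∧ w j ≠ 0 := by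
  obtain ⟨a, rfl, hared⟩ := (mem_codeLattice_iff C).mp hx.1
  have hai : a i ≠ 0 := by
    intro h; exact hi (by simp [halfVec, h])
  have haj : a j ≠ 0 := by
    intro h; exact hj (by simp [halfVec, h])
  have hsum : ∑ k, (a k)^2 = 4 := sum_sq_eq_four C hC hared hx
  set w := redVec a with hwdef
  -- w ≠ 0
  have hw0 : w ≠ 0 := by
    intro h0
    have heven : ∀ k, redVec a k = 0 → (2:ℤ) ∣ a k := by
      intro k hk
      exact (ZMod.intCast_zmod_eq_zero_iff_dvd _ 2).mp (by simpa [redVec] using hk)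
    have h8 : (8:ℤ) ≤ ∑ k, (a k)^2 := by
      have hpair : ∑ k ∈ ({i, j} : Finset (Fin n)), (a k)^2 ≤ ∑ k, (a k)^2 :=
        Finset.sum_le_sum_of_subset_of_nonneg (Finset.subset_univ _)
          (fun k _ _ => sq_nonneg _)
      rw [Finset.sum_pair hij] at hpair
      have h4i : 4 ≤ (a i)^2 := four_le_sq_of_even (heven i (by rw [← hwdef, h0]; rfl)) hai
      have h4j : 4 ≤ (a j)^2 := four_le_sq_of_even (heven j (by rw [← hwdef, h0]; rfl)) haj
      omega
    omega
  have hwt4 : 4 ≤ hammingNorm w := hC _ hared hw0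
  -- each support element contributes ≥ 1
  have hsupp : ∀ k ∈ Finset.univ.filter (fun k => w k ≠ 0), 1 ≤ (a k)^2 := by
    intro k hk
    exact sq_pos_of_ne (odd_of_red_ne (Finset.mem_filter.mp hk).2)
  have hsuppsum : (hammingNorm w : ℤ) ≤ ∑ k ∈ Finset.univ.filter (fun k => w k ≠ 0), (a k)^2 := by
    rw [hammingNorm]
    calc ((Finset.univ.filter (fun k => w k ≠ 0)).card : ℤ)
        = ∑ k ∈ Finset.univ.filter (fun k => w k ≠ 0), 1 := by simp
      _ ≤ _ := Finset.sum_le_sum hsupp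
  have hsub : ∑ k ∈ Finset.univ.filter (fun k => w k ≠ 0), (a k)^2 ≤ ∑ k, (a k)^2 :=
    Finset.sum_le_sum_of_subset_of_nonneg (Finset.filter_subset _ _)
      (fun k _ _ => sq_nonneg _)
  have hwt : hammingNorm w = 4 := by
    have : (hammingNorm w : ℤ) ≤ 4 := by omega
    omega
  -- w i ≠ 0
  have hcontrib : ∀ k, w k = 0 → a k ≠ 0 → False := by
    intro k hk hak
    have hk1 : 1 ≤ (a k)^2 := sq_pos_of_ne hak
    have hknot : k ∉ Finset.univ.filter (fun l => w l ≠ 0) := by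
      simp [hk]
    have : ∑ l ∈ insert k (Finset.univ.filter (fun l => w l ≠ 0)), (a l)^2
        ≤ ∑ l, (a l)^2 :=
      Finset.sum_le_sum_of_subset_of_nonneg (Finset.subset_univ _)
        (fun l _ _ => sq_nonneg _)
    rw [Finset.sum_insert hknot] at this
    omega
  refine ⟨w, hared, hwt, ?_, ?_⟩
  · intro h; exact hcontrib i h hai
  · intro h; exact hcontrib j h haj

lemma single_minimal (hC : ∀ w ∈ C, w ≠ 0 → 4 ≤ hammingNorm w) (i : Fin n) :
    EuclideanSpace.single i (1:ℝ) ∈ minimalVectors (codeLattice C) := by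
  refine ⟨Submodule.subset_span (Or.inl ⟨i, rfl⟩), ?_, ?_⟩
  · intro h
    have := congrArg (fun v : EuclideanSpace ℝ (Fin n) => v i) h
    simp [EuclideanSpace.single_apply] at this
  · rw [latticeMin_eq_one C hC i.pos, inner_self_eq]
    simp [EuclideanSpace.single_apply]

def sv (w : Fin n → ZMod 2) (σ : Fin n → ℤ) : EuclideanSpace ℝ (Fin n) :=
  WithLp.toLp 2 (fun k => (σ k : ℝ) * ((w k).val : ℝ) / 2)

lemma val01 (x : ZMod 2) : x.val = 0 ∨ x.val = 1 := by revert x; decide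

lemma val_one_of_ne {x : ZMod 2} (h : x ≠ 0) : x.val = 1 := by revert h; revert x; decide

lemma sv_minimal (hC : ∀ w ∈ C, w ≠ 0 → 4 ≤ hammingNorm w)
    {w : Fin n → ZMod 2} (hw : w ∈ C) (h4 : hammingNorm w = 4)
    {σ : Fin n → ℤ} (hσ : ∀ k, σ k = 1 ∨ σ k = -1) :
    sv w σ ∈ minimalVectors (codeLattice C) := by
  have hwne : w ≠ 0 := by
    intro h; rw [h, hammingNorm_zero] at h4; omega
  obtain ⟨k0, hk0⟩ : ∃ k, w k ≠ 0 := by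
    by_contra h
    push_neg at h
    exact hwne (funext h)
  refine ⟨?_, ?_, ?_⟩
  · rw [mem_codeLattice_iff]
    refine ⟨fun k => σ k * ((w k).val : ℤ), ?_, ?_⟩
    · ext k
      rw [sv, halfVec, PiLp.toLp_apply, PiLp.toLp_apply]
      push_cast
      ring
    · have : redVec (fun k => σ k * ((w k).val : ℤ)) = w := by
        funext k
        rw [redVec]
        push_cast
        have hneg : ((-1:ℤ) : ZMod 2) = 1 := by decide
        rcases hσ k with h | h <;>
          simp [h, hneg, ZMod.natCast_val, ZMod.cast_id]
      rw [this]; exact hw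
  · intro h
    have := congrArg (fun v : EuclideanSpace ℝ (Fin n) => v k0) h
    rw [sv, PiLp.toLp_apply] at this
    have hv : ((w k0).val : ℝ) = 1 := by rw [val_one_of_ne hk0]; norm_num
    rw [hv] at this
    rcases hσ k0 with h1 | h1 <;> rw [h1] at this <;> norm_num at this
  · rw [latticeMin_eq_one C hC k0.pos, inner_self_eq]
    have : ∀ k, sv w σ k * sv w σ k = ((w k).val : ℝ)/4 := by
      intro k
      rw [sv, PiLp.toLp_apply]
      rcases val01 (w k) with h | h <;> rw [h] <;>
        rcases hσ k with h1 | h1 <;> rw [h1] <;> norm_num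
    rw [Finset.sum_congr rfl fun k _ => this k, ← Finset.sum_div]
    have hs : ∑ k, ((w k).val : ℝ) = 4 := by
      have := sum_val w
      rw [h4] at this
      exact_mod_cast congrArg (Nat.cast : ℕ → ℝ) this
    rw [hs]; norm_num

def Cov (p : Finset (Fin n)) : Prop := ∃ w ∈ C, hammingNorm w = 4 ∧ ∀ i ∈ p, w i ≠ 0

def Dmat (i : Fin n) : Matrix (Fin n) (Fin n) ℝ :=
  Matrix.of fun x y => if x = i ∧ y = i then (1:ℝ) else 0

def Fmat (p : Finset (Fin n)) : Matrix (Fin n) (Fin n) ℝ :=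
  Matrix.of fun x y => if x ∈ p ∧ y ∈ p ∧ x ≠ y then (1:ℝ) else 0

def bFam : (Fin n ⊕ {p : Finset (Fin n) // p.card = 2 ∧ Cov C p}) → Matrix (Fin n) (Fin n) ℝ :=
  Sum.elim (fun i => Dmat i) (fun p => Fmat p.1)

lemma bFam_li : LinearIndependent ℝ (bFam C) := by
  classical
  rw [Fintype.linearIndependent_iff]
  intro g hg s
  have entry : ∀ u v : Fin n, ∑ t, g t * (bFam C t u v) = 0 := by
    intro u v
    have h1 := congrFun (congrFun hg u) v
    have h2 : (∑ t, g t • bFam C t) u v = ∑ t, g t * (bFam C t u v) := by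
      rw [Matrix.sum_apply]
      · rfl
    rw [h2] at h1
    simpa using h1
  cases s with
  | inl i =>
    have := entry i i
    rw [Fintype.sum_sum_type] at this
    have hL : ∑ k, g (Sum.inl k) * (bFam C (Sum.inl k) i i) = g (Sum.inl i) := by
      rw [Finset.sum_eq_single i]
      · simp [bFam, Dmat]
      · intro k _ hk
        simp [bFam, Dmat, Ne.symm hk]
      · simp
    have hR : ∀ q, g (Sum.inr q) * (bFam C (Sum.inr q) i i) = 0 := by
      intro q
      simp [bFam, Fmat]
    rw [hL, Finset.sum_congr rfl (fun q _ => hR q), Finset.sum_const_zero] at this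
    simpa using this
  | inr p =>
    obtain ⟨i, j, hij, hp⟩ := Finset.card_eq_two.mp p.2.1
    have := entry i j
    rw [Fintype.sum_sum_type] at this
    have hL : ∀ k, g (Sum.inl k) * (bFam C (Sum.inl k) i j) = 0 := by
      intro k
      have : ¬ (i = k ∧ j = k) := by rintro ⟨rfl, rfl⟩; exact hij rfl
      simp [bFam, Dmat, this]
    have hR : ∑ q, g (Sum.inr q) * (bFam C (Sum.inr q) i j) = g (Sum.inr p) := by
      rw [Finset.sum_eq_single p]
      · have : i ∈ p.1 ∧ j ∈ p.1 ∧ i ≠ j := by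
          refine ⟨?_, ?_, hij⟩ <;> simp [hp]
        simp [bFam, Fmat, this]
      · intro q _ hq
        have : ¬ (i ∈ q.1 ∧ j ∈ q.1 ∧ i ≠ j) := by
          rintro ⟨hiq, hjq, -⟩
          apply hq
          have hsub : ({i, j} : Finset (Fin n)) ⊆ q.1 := by
            intro z hz
            rcases Finset.mem_insert.mp hz with rfl | hz
            · exact hiq
            · rw [Finset.mem_singleton.mp hz]; exact hjq
          have : ({i, j} : Finset (Fin n)) = q.1 :=
            Finset.eq_of_subset_of_card_le hsub
              (by rw [q.2.1, Finset.card_pair hij])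
          exact Subtype.ext (by rw [← this, hp])
        simp [bFam, Fmat, this]
      · simp
    rw [Finset.sum_congr rfl (fun k _ => hL k), Finset.sum_const_zero, hR] at this
    simpa using this

lemma mem_span_bFam {M : Matrix (Fin n) (Fin n) ℝ}
    (hsym : ∀ x y, M x y = M y x)
    (hvan : ∀ x y, x ≠ y → ¬ Cov C {x, y} → M x y = 0) :
    M ∈ Submodule.span ℝ (Set.range (bFam C)) := by
  classical
  have key : M = ∑ x : Fin n, ∑ y : Fin n,
      (if x = y then M x x • Dmat x else (M x y / 2) • Fmat {x, y}) := by
    ext u v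
    rw [Matrix.sum_apply]
    rw [Finset.sum_congr rfl (fun x _ => Matrix.sum_apply u v _ _)]
    by_cases huv : u = v
    · subst huv
      have hterm : ∀ x y : Fin n,
          (if x = y then M x x • Dmat x else (M x y / 2) • Fmat {x, y}) u u
          = if x = u then (if y = u then M u u else 0) else 0 := by
        intro x y
        clear hvan hsym
        rw [apply_ite (fun m : Matrix (Fin n) (Fin n) ℝ => m u u)]
        simp only [Matrix.smul_apply, Matrix.of_apply, smul_eq_mul, Dmat, Fmat,
          Finset.mem_insert, Finset.mem_singleton]
        by_cases hxy : x = y <;> by_cases hxu : x = u <;> by_cases hyu : y = u <;>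
          first | ring1 | aesop
      rw [Finset.sum_congr rfl fun x _ => Finset.sum_congr rfl fun y _ => hterm x y]
      have hA : ∀ x : Fin n, (∑ y : Fin n, if x = u then (if y = u then M u u else 0) else 0)
          = if x = u then M u u else 0 := by
        intro x
        by_cases hx : x = u <;> simp [hx, Finset.sum_ite_eq']
      rw [Finset.sum_congr rfl fun x _ => hA x]
      simp [Finset.sum_ite_eq']
    · have hterm : ∀ x y : Fin n,
          (if x = y then M x x • Dmat x else (M x y / 2) • Fmat {x, y}) u v
          = (if x = u then (if y = v then M u v / 2 else 0) else 0)
            + (if x = v then (if y = u then M v u / 2 else 0) else 0) := by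
        intro x y
        clear hvan hsym
        rw [apply_ite (fun m : Matrix (Fin n) (Fin n) ℝ => m u v)]
        simp only [Matrix.smul_apply, Matrix.of_apply, smul_eq_mul, Dmat, Fmat,
          Finset.mem_insert, Finset.mem_singleton]
        by_cases hxy : x = y <;> by_cases hxu : x = u <;> by_cases hyv : y = v <;>
          by_cases hxv : x = v <;> by_cases hyu : y = u <;>
          first | ring1 | aesop
      rw [Finset.sum_congr rfl fun x _ => Finset.sum_congr rfl fun y _ => hterm x y]
      rw [Finset.sum_congr rfl fun x _ => Finset.sum_add_distrib]
      rw [Finset.sum_add_distrib]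
      have hA : ∀ (c : ℝ) (s t : Fin n),
          (∑ x : Fin n, ∑ y : Fin n, if x = s then (if y = t then c else 0) else 0) = c := by
        intro c s t
        have : ∀ x : Fin n, (∑ y : Fin n, if x = s then (if y = t then c else 0) else 0)
            = if x = s then c else 0 := by
          intro x
          by_cases hx : x = s <;> simp [hx, Finset.sum_ite_eq']
        rw [Finset.sum_congr rfl fun x _ => this x]
        simp [Finset.sum_ite_eq']
      rw [hA, hA, hsym v u]
      ring
  rw [key]
  refine Submodule.sum_mem _ fun x _ => Submodule.sum_mem _ fun y _ => ?_
  by_cases hxy : x = y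
  · rw [if_pos hxy]
    exact Submodule.smul_mem _ _ (Submodule.subset_span ⟨Sum.inl x, rfl⟩)
  · rw [if_neg hxy]
    by_cases hcov : Cov C {x, y}
    · exact Submodule.smul_mem _ _ (Submodule.subset_span
        ⟨Sum.inr ⟨{x, y}, Finset.card_pair hxy, hcov⟩, rfl⟩)
    · rw [hvan x y hxy hcov]
      simp

lemma fmat_comb {w : Fin n → ZMod 2} {i j : Fin n} (hij : i ≠ j)
    (hwi : w i ≠ 0) (hwj : w j ≠ 0) :
    Fmat ({i, j} : Finset (Fin n)) =
      (Matrix.of fun a b => sv w 1 a * sv w 1 b)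
      + (Matrix.of fun a b => sv w (fun k => if k = i ∨ k = j then -1 else 1) a
          * sv w (fun k => if k = i ∨ k = j then -1 else 1) b)
      - (Matrix.of fun a b => sv w (fun k => if k = i then -1 else 1) a
          * sv w (fun k => if k = i then -1 else 1) b)
      - (Matrix.of fun a b => sv w (fun k => if k = j then -1 else 1) a
          * sv w (fun k => if k = j then -1 else 1) b) := by
  have hvi : ((w i).val : ℝ) = 1 := by rw [val_one_of_ne hwi]; norm_num
  have hvj : ((w j).val : ℝ) = 1 := by rw [val_one_of_ne hwj]; norm_num
  ext x y
  simp only [Fmat, Matrix.sub_apply, Matrix.add_apply, Matrix.of_apply, sv, PiLp.toLp_apply,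
    Finset.mem_insert, Finset.mem_singleton, Pi.one_apply, Int.cast_one]
  by_cases hxi : x = i <;> by_cases hxj : x = j <;>
    by_cases hyi : y = i <;> by_cases hyj : y = j <;>
    subst_eqs <;>
    simp_all <;>
    push_cast <;>
    ring1

lemma span_eq (hC : ∀ w ∈ C, w ≠ 0 → 4 ≤ hammingNorm w) :
    Submodule.span ℝ
        ((fun v : EuclideanSpace ℝ (Fin n) =>
          Matrix.of fun i j => v i * v j) '' minimalVectors (codeLattice C))
      = Submodule.span ℝ (Set.range (bFam C)) := by
  apply le_antisymm
  · rw [Submodule.span_le]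
    rintro M ⟨v, hv, rfl⟩
    apply mem_span_bFam
    · intro x y
      show v x * v y = v y * v x
      ring
    · intro x y hxy hcov
      show v x * v y = 0
      by_contra h
      have hx : v x ≠ 0 := left_ne_zero_of_mul h
      have hy : v y ≠ 0 := right_ne_zero_of_mul h
      obtain ⟨w, hwC, hw4, hwx, hwy⟩ := pair_covered C hC hv hxy hx hy
      refine hcov ⟨w, hwC, hw4, fun k hk => ?_⟩
      rcases Finset.mem_insert.mp hk with rfl | hk
      · exact hwx
      · rw [Finset.mem_singleton.mp hk]; exact hwy
  · rw [Submodule.span_le]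
    rintro M ⟨t, rfl⟩
    cases t with
    | inl i =>
      apply Submodule.subset_span
      refine ⟨EuclideanSpace.single i 1, single_minimal C hC i, ?_⟩
      ext x y
      show EuclideanSpace.single i (1:ℝ) x * EuclideanSpace.single i (1:ℝ) y
        = (if x = i ∧ y = i then (1:ℝ) else 0)
      simp only [EuclideanSpace.single_apply]
      by_cases hx : x = i <;> by_cases hy : y = i <;> simp [hx, hy]
    | inr p =>
      obtain ⟨i, j, hij, hp⟩ := Finset.card_eq_two.mp p.2.1
      obtain ⟨w, hwC, hw4, hsupp⟩ := p.2.2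
      have hwi : w i ≠ 0 := hsupp i (by rw [hp]; exact Finset.mem_insert_self _ _)
      have hwj : w j ≠ 0 := hsupp j (by
        rw [hp]; exact Finset.mem_insert_of_mem (Finset.mem_singleton_self _))
      show Fmat p.1 ∈ _
      rw [hp, fmat_comb hij hwi hwj]
      have hm : ∀ σ : Fin n → ℤ, (∀ k, σ k = 1 ∨ σ k = -1) →
          (Matrix.of fun a b => sv w σ a * sv w σ b) ∈
            Submodule.span ℝ
              ((fun v : EuclideanSpace ℝ (Fin n) =>
                Matrix.of fun i j => v i * v j) '' minimalVectors (codeLattice C)) := by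
        intro σ hσ
        exact Submodule.subset_span ⟨sv w σ, sv_minimal C hC hwC hw4 hσ, rfl⟩
      refine sub_mem (sub_mem (add_mem ?_ ?_) ?_) ?_
      · exact hm 1 fun k => Or.inl rfl
      · exact hm _ fun k => by by_cases h : (k = i ∨ k = j) <;> simp [h]
      · exact hm _ fun k => by by_cases h : k = i <;> simp [h]
      · exact hm _ fun k => by by_cases h : k = j <;> simp [h]

lemma harith (n : ℕ) : n + n.choose 2 = n * (n + 1) / 2 := by
  rcases n with _ | m
  · rfl
  · rw [Nat.choose_two_right]
    have h1 : (m + 1) * (m + 1 - 1) = (m + 1) * m := by rfl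
    obtain ⟨k, hk⟩ := Nat.even_mul_succ_self m
    have h2 : (m + 1) * m = m * (m + 1) := Nat.mul_comm _ _
    have h3 : (m + 1) * (m + 1 + 1) = m * (m + 1) + 2 * (m + 1) := by ring
    omega

end Aux

/-- Let `C ⊆ 𝔽₂ⁿ` be a binary linear code all of whose nonzero words have
Hamming weight `≥ 4`, and let `t` be the number of 2-element subsets `{i, j}`
of the coordinates such that `i` and `j` do not both belong to the support of
any weight-4 codeword of `C`.  Then the perfection rank of `Λ_C` — the
dimension of the span of the rank-one matrices `v·vᵀ`, `v ∈ S(Λ_C)` — equals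
`n(n+1)/2 − t` (stated additively as `rank + t = n(n+1)/2`). -/
theorem codeLattice_perfection_rank {n : ℕ}
    (C : Submodule (ZMod 2) (Fin n → ZMod 2))
    (hC : ∀ w ∈ C, w ≠ 0 → 4 ≤ hammingNorm w) :
    Module.finrank ℝ (Submodule.span ℝ
        ((fun v : EuclideanSpace ℝ (Fin n) =>
          Matrix.of fun i j => v i * v j) '' minimalVectors (codeLattice C)))
      + Nat.card {p : Finset (Fin n) // p.card = 2 ∧
          ¬ ∃ w ∈ C, hammingNorm w = 4 ∧ ∀ i ∈ p, w i ≠ 0}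
      = n * (n + 1) / 2 := by
  classical
  rw [Aux.span_eq C hC, finrank_span_eq_card (Aux.bFam_li C)]
  rw [Fintype.card_sum, Fintype.card_fin]
  have hchoose : Nat.card {p : Finset (Fin n) // p.card = 2} = n.choose 2 := by
    rw [Nat.card_eq_fintype_card, Fintype.card_subtype]
    have e3 : (Finset.univ.filter fun p : Finset (Fin n) => p.card = 2)
        = Finset.powersetCard 2 (Finset.univ : Finset (Fin n)) := by
      ext p
      simp [Finset.mem_powersetCard_univ]
    rw [e3, Finset.card_powersetCard, Finset.card_univ, Fintype.card_fin]
  have key : Fintype.card {p : Finset (Fin n) // p.card = 2 ∧ Aux.Cov C p}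
      + Nat.card {p : Finset (Fin n) // p.card = 2 ∧
          ¬ ∃ w ∈ C, hammingNorm w = 4 ∧ ∀ i ∈ p, w i ≠ 0}
      = n.choose 2 := by
    rw [← Nat.card_eq_fintype_card
      (α := {p : Finset (Fin n) // p.card = 2 ∧ Aux.Cov C p}), ← Nat.card_sum]
    rw [← hchoose]
    apply Nat.card_congr
    refine Equiv.trans (Equiv.sumCongr ?_ ?_)
      (Equiv.sumCompl fun x : {p : Finset (Fin n) // p.card = 2} => Aux.Cov C x.1)
    · exact (Equiv.subtypeSubtypeEquivSubtypeInter _ _).symm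
    · exact (Equiv.subtypeSubtypeEquivSubtypeInter
        (fun p : Finset (Fin n) => p.card = 2) (fun p => ¬ Aux.Cov C p)).symm
  have := Aux.harith n
  rw [Nat.add_assoc, key]
  exact this
end
end
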